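/- arXiv:1609.07999 — 11 statements merged into one kernel-verified Lean document; each statement's English description precedes it below -/
import Mathlib

section
/- For all real x with 0 ≤ x ≤ 1, one has 2²·(f((1+x)/4) − f((1−x)/4)) = 2x. -/
open scoped BigOperators

theorem fabius_stmt_1 (f : ℝ → ℝ)
    (hcont : ContinuousOn f (Set.Ici 0))
    (hsym : ∀ x : ℝ, 0 ≤ x → x ≤ 1 → f x + f (1 - x) = 1)
    (hint : ∀ x : ℝ, 0 ≤ x → f x = ∫ t in (0:ℝ)..(2 * x), f t) :
    ∀ x : ℝ, 0 ≤ x → x ≤ 1 →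
      2 ^ 2 * (f ((1 + x) / 4) - f ((1 - x) / 4)) = 2 * x := by
  intro x hx0 hx1
  set a : ℝ := (1 - x) / 2 with ha
  set b : ℝ := (1 + x) / 2 with hb
  have ha0 : (0:ℝ) ≤ a := by unfold a; linarith
  have hab : a ≤ b := by unfold a b; linarith
  have hb1 : b ≤ 1 := by unfold b; linarith
  have h1 : f ((1 + x) / 4) = ∫ t in (0:ℝ)..b, f t := by
    have := hint ((1 + x) / 4) (by linarith)
    rw [this]; norm_num [hb]; ring_nf
  have h2 : f ((1 - x) / 4) = ∫ t in (0:ℝ)..a, f t := by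
    have := hint ((1 - x) / 4) (by linarith)
    rw [this]; norm_num [ha]; ring_nf
  -- integrability on [a,b]
  have hmono : Set.uIcc a b ⊆ Set.Ici 0 := by
    rw [Set.uIcc_of_le hab]
    exact fun t ht => le_trans ha0 ht.1
  have hInt : IntervalIntegrable f MeasureTheory.volume a b :=
    (hcont.mono hmono).intervalIntegrable
  have hInt0a : IntervalIntegrable f MeasureTheory.volume 0 a := by
    apply ContinuousOn.intervalIntegrable
    apply hcont.mono
    rw [Set.uIcc_of_le ha0]
    exact fun t ht => ht.1
  have hsplit : (∫ t in (0:ℝ)..b, f t) - (∫ t in (0:ℝ)..a, f t) = ∫ t in a..b, f t := by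
    rw [← intervalIntegral.integral_add_adjacent_intervals hInt0a hInt]
    ring
  have hcomp : (∫ t in a..b, f (1 - t)) = ∫ t in a..b, f t := by
    rw [intervalIntegral.integral_comp_sub_left f 1]
    have e1 : 1 - b = a := by unfold a b; ring
    have e2 : 1 - a = b := by unfold a b; ring
    rw [e1, e2]
  have hInt' : IntervalIntegrable (fun t => f (1 - t)) MeasureTheory.volume a b := by
    have := hInt.comp_sub_left 1
    have e1 : 1 - b = a := by unfold a b; ring
    have e2 : 1 - a = b := by unfold a b; ring
    rw [e1, e2] at this; exact this.symm
  have hcongr : (∫ t in a..b, f t) = ∫ t in a..b, (1 - f (1 - t)) := by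
    apply intervalIntegral.integral_congr
    intro t ht
    rw [Set.uIcc_of_le hab] at ht
    have h0t : 0 ≤ t := le_trans ha0 ht.1
    have ht1 : t ≤ 1 := le_trans ht.2 hb1
    have := hsym t h0t ht1
    simp only; linarith
  have key : (∫ t in a..b, f t) = x / 2 := by
    have h3 : (∫ t in a..b, (1 - f (1 - t))) =
        (∫ t in a..b, (1:ℝ)) - ∫ t in a..b, f (1 - t) := by
      exact intervalIntegral.integral_sub intervalIntegrable_const hInt'
    have h4 : (∫ t in a..b, (1:ℝ)) = b - a := by simp
    have hba : b - a = x := by unfold a b; ring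
    have := hcongr
    rw [h3, h4, hcomp, hba] at this
    linarith
  rw [h1, h2, hsplit, key]
  ring
end

section
/- For all real x with 0 ≤ x ≤ 1, one has 2⁵·(f((1+x)/8) + f((1−x)/8)) = 2/9 + 2x². -/
/-!
Writing `f(c + x) - f(c - x) = ∫_{2c-2x}^{2c+2x} f` and folding the integral about its centre
gives `∫₀^{2x} (f(2c + t) + f(2c - t)) dt`. At `c = 1/4` the symmetry makes the integrand `1`,
so `f(1/4 + x) - f(1/4 - x) = 2x`. Folding the second difference of `f` about `1/8` the same
way then gives `f(1/8 + x) + f(1/8 - x) = 2 f(1/8) + 4x²`, and integrating this identity over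
`[0, 1/8]` turns `f(1/8) = ∫₀^{1/4} f` into `f(1/8) = f(1/8)/4 + 1/384`, i.e. `f(1/8) = 1/288`.
-/

open scoped BigOperators

open Set MeasureTheory intervalIntegral

section Reflection

variable {f : ℝ → ℝ} {c r : ℝ}

theorem integral_comp_add_add_comp_sub (hl : IntervalIntegrable f volume (c - r) c)
    (hr : IntervalIntegrable f volume c (c + r)) :
    ∫ t in (0 : ℝ)..r, (f (c + t) + f (c - t)) = ∫ t in (c - r)..(c + r), f t := by
  rw [intervalIntegral.integral_add (by simpa using hr.comp_add_left c)
      (by simpa using (hl.comp_sub_left c).symm),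
    integral_comp_add_left, integral_comp_sub_left, add_zero, sub_zero, add_comm,
    integral_add_adjacent_intervals hl hr]

theorem integral_comp_add_sub_comp_sub (hl : IntervalIntegrable f volume (c - r) c)
    (hr : IntervalIntegrable f volume c (c + r)) :
    ∫ t in (0 : ℝ)..r, (f (c + t) - f (c - t)) =
      (∫ t in c..(c + r), f t) - ∫ t in (c - r)..c, f t := by
  rw [intervalIntegral.integral_sub (by simpa using hr.comp_add_left c)
      (by simpa using (hl.comp_sub_left c).symm),
    integral_comp_add_left, integral_comp_sub_left, add_zero, sub_zero]

end Reflection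

section Fabius

variable {f : ℝ → ℝ}

theorem ContinuousOn.intervalIntegrable_of_nonneg (hcont : ContinuousOn f (Ici 0)) {a b : ℝ}
    (ha : 0 ≤ a) (hb : 0 ≤ b) : IntervalIntegrable f volume a b :=
  (hcont.mono (ordConnected_Ici.uIcc_subset ha hb)).intervalIntegrable

variable (hcont : ContinuousOn f (Ici 0))
  (hint : ∀ x : ℝ, 0 ≤ x → f x = ∫ t in (0 : ℝ)..(2 * x), f t)
include hcont hint

theorem sub_eq_integral_of_eq_integral_two_mul {x y : ℝ} (hx : 0 ≤ x) (hy : 0 ≤ y) :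
    f x - f y = ∫ t in (2 * y)..(2 * x), f t := by
  rw [hint x hx, hint y hy, integral_interval_sub_left
    (hcont.intervalIntegrable_of_nonneg le_rfl (by positivity))
    (hcont.intervalIntegrable_of_nonneg le_rfl (by positivity))]

variable (hsym : ∀ x : ℝ, 0 ≤ x → x ≤ 1 → f x + f (1 - x) = 1)
include hsym

theorem fabius_odd_part_at_quarter {x : ℝ} (hx₀ : 0 ≤ x) (hx₁ : x ≤ 1 / 4) :
    f (1 / 4 + x) - f (1 / 4 - x) = 2 * x := by
  have hhalf : ∀ t ∈ uIcc 0 (2 * x), f (1 / 2 + t) + f (1 / 2 - t) = 1 := by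
    intro t ht
    rw [uIcc_of_le (by positivity)] at ht
    have := hsym (1 / 2 - t) (by linarith [ht.2]) (by linarith [ht.1])
    rwa [show (1 : ℝ) - (1 / 2 - t) = 1 / 2 + t by ring, add_comm] at this
  calc f (1 / 4 + x) - f (1 / 4 - x)
      = ∫ t in (1 / 2 - 2 * x)..(1 / 2 + 2 * x), f t := by
        rw [sub_eq_integral_of_eq_integral_two_mul hcont hint (by linarith) (by linarith)]
        ring_nf
    _ = ∫ t in (0 : ℝ)..(2 * x), (f (1 / 2 + t) + f (1 / 2 - t)) :=
        (integral_comp_add_add_comp_sub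
          (hcont.intervalIntegrable_of_nonneg (by linarith) (by norm_num))
          (hcont.intervalIntegrable_of_nonneg (by norm_num) (by linarith))).symm
    _ = 2 * x := by rw [integral_congr hhalf]; simp

theorem fabius_even_part_at_eighth {x : ℝ} (hx₀ : 0 ≤ x) (hx₁ : x ≤ 1 / 8) :
    f (1 / 8 + x) + f (1 / 8 - x) = 2 * f (1 / 8) + 4 * x ^ 2 := by
  have hodd : ∀ t ∈ uIcc 0 (2 * x), f (1 / 4 + t) - f (1 / 4 - t) = 2 * t := by
    intro t ht
    rw [uIcc_of_le (by positivity)] at ht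
    exact fabius_odd_part_at_quarter hcont hint hsym ht.1 (by linarith [ht.2])
  have hsecond : (f (1 / 8 + x) - f (1 / 8)) - (f (1 / 8) - f (1 / 8 - x)) = 4 * x ^ 2 :=
    calc (f (1 / 8 + x) - f (1 / 8)) - (f (1 / 8) - f (1 / 8 - x))
        = (∫ t in (1 / 4)..(1 / 4 + 2 * x), f t) - ∫ t in (1 / 4 - 2 * x)..(1 / 4), f t := by
          rw [sub_eq_integral_of_eq_integral_two_mul hcont hint (by linarith) (by norm_num),
            sub_eq_integral_of_eq_integral_two_mul hcont hint (by norm_num) (by linarith)]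
          ring_nf
      _ = ∫ t in (0 : ℝ)..(2 * x), (f (1 / 4 + t) - f (1 / 4 - t)) :=
          (integral_comp_add_sub_comp_sub
            (hcont.intervalIntegrable_of_nonneg (by linarith) (by norm_num))
            (hcont.intervalIntegrable_of_nonneg (by norm_num) (by linarith))).symm
      _ = 4 * x ^ 2 := by
          rw [integral_congr hodd, intervalIntegral.integral_const_mul, integral_id]
          ring
  linarith

theorem fabius_apply_eighth : f (1 / 8) = 1 / 288 := by
  have heven : ∀ t ∈ uIcc 0 (1 / 8),
      f (1 / 8 + t) + f (1 / 8 - t) = 2 * f (1 / 8) + 4 * t ^ 2 := by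
    intro t ht
    rw [uIcc_of_le (by norm_num)] at ht
    exact fabius_even_part_at_eighth hcont hint hsym ht.1 ht.2
  have hfixed : f (1 / 8) = f (1 / 8) / 4 + 1 / 384 :=
    calc f (1 / 8) = ∫ t in (1 / 8 - 1 / 8 : ℝ)..(1 / 8 + 1 / 8), f t := by
          rw [hint _ (by norm_num)]
          norm_num
      _ = ∫ t in (0 : ℝ)..(1 / 8), (f (1 / 8 + t) + f (1 / 8 - t)) :=
          (integral_comp_add_add_comp_sub
            (hcont.intervalIntegrable_of_nonneg (by norm_num) (by norm_num))
            (hcont.intervalIntegrable_of_nonneg (by norm_num) (by norm_num))).symm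
      _ = ∫ t in (0 : ℝ)..(1 / 8), (2 * f (1 / 8) + 4 * t ^ 2) := integral_congr heven
      _ = f (1 / 8) / 4 + 1 / 384 := by
          rw [intervalIntegral.integral_add (by simp) (by simp), intervalIntegral.integral_const,
            intervalIntegral.integral_const_mul, integral_pow, smul_eq_mul]
          ring
  linarith

end Fabius

theorem fabius_stmt_2 (f : ℝ → ℝ)
    (hcont : ContinuousOn f (Set.Ici 0))
    (hsym : ∀ x : ℝ, 0 ≤ x → x ≤ 1 → f x + f (1 - x) = 1)
    (hint : ∀ x : ℝ, 0 ≤ x → f x = ∫ t in (0:ℝ)..(2 * x), f t) :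
    ∀ x : ℝ, 0 ≤ x → x ≤ 1 →
      2 ^ 5 * (f ((1 + x) / 8) + f ((1 - x) / 8)) = 2 / 9 + 2 * x ^ 2 := by
  intro x hx₀ hx₁
  rw [show (1 + x) / 8 = 1 / 8 + x / 8 by ring, show (1 - x) / 8 = 1 / 8 - x / 8 by ring,
    fabius_even_part_at_eighth hcont hint hsym (by positivity) (by linarith),
    fabius_apply_eighth hcont hint hsym]
  ring
end

section
/- For all real x with 0 ≤ x ≤ 1, one has 2¹³·(f((1+x)/32) + f((1−x)/32)) = 19/2025 + (2/9)x² + (1/3)x⁴. -/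
/-!
Differentiating the integral equation gives `f' y = 2 f (2 y)` for `y > 0`. Hence the combination
`f ((1 + x) / (2c)) - σ f ((1 - x) / (2c))` has derivative
`(f ((1 + x) / c) + σ f ((1 - x) / c)) / c`: one differentiation halves the scale and flips the
sign between the symmetric and antisymmetric combinations. The symmetry `f x + f (1 - x) = 1`
makes the symmetric combination at scale `2` identically `1`, so five integrations give
polynomials in `x` at scales `4, …, 64`. The constants of integration are values `f (1 / c)` of
the symmetric combinations; the antisymmetric ones at `x = 1` reduce to `f (2 / c) - f 0 =
f (2 / c)` and determine `f (1 / 8) = 1 / 288` and then `f (1 / 32) = 19 / 33177600`.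
-/

open Set intervalIntegral

noncomputable def mirrorSum (f : ℝ → ℝ) (c σ x : ℝ) : ℝ :=
  f ((1 + x) / c) + σ * f ((1 - x) / c)

section

variable {f : ℝ → ℝ}

lemma hasDerivAt_of_eq_integral_two_mul (hcont : ContinuousOn f (Ici 0))
    (hint : ∀ x : ℝ, 0 ≤ x → f x = ∫ t in (0:ℝ)..(2 * x), f t) {y : ℝ} (hy : 0 < y) :
    HasDerivAt f (2 * f (2 * y)) y := by
  have h2y : 0 < 2 * y := by positivity
  have hFTC : HasDerivAt (fun u => ∫ t in (0:ℝ)..u, f t) (f (2 * y)) (2 * y) :=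
    integral_hasDerivAt_right
      ((hcont.mono fun t ht => by simp_all [uIcc_of_le h2y.le]).intervalIntegrable)
      ((hcont.mono (Ioi_subset_Ici le_rfl)).stronglyMeasurableAtFilter isOpen_Ioi _ h2y)
      (hcont.continuousAt (Ici_mem_nhds h2y))
  have hcomp := hFTC.comp y ((hasDerivAt_id y).const_mul 2)
  refine (hcomp.congr_of_eventuallyEq ?_).congr_deriv (by simp [mul_comm])
  filter_upwards [Ioi_mem_nhds hy] with u hu using hint u hu.le

lemma mirrorSum_zero (c σ : ℝ) : mirrorSum f c σ 0 = (1 + σ) * f (1 / c) := by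
  simp only [mirrorSum, add_zero, sub_zero]
  ring

lemma continuousOn_mirrorSum (hcont : ContinuousOn f (Ici 0)) {c : ℝ} (hc : 0 < c) (σ : ℝ) :
    ContinuousOn (mirrorSum f c σ) (Icc (-1) 1) := by
  have hplus : ContinuousOn (fun x => f ((1 + x) / c)) (Icc (-1) 1) :=
    hcont.comp (by fun_prop) fun x hx => div_nonneg (by linarith [hx.1]) hc.le
  have hminus : ContinuousOn (fun x => f ((1 - x) / c)) (Icc (-1) 1) :=
    hcont.comp (by fun_prop) fun x hx => div_nonneg (by linarith [hx.2]) hc.le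
  exact hplus.add (hminus.const_smul σ)

lemma hasDerivAt_mirrorSum (hd : ∀ y : ℝ, 0 < y → HasDerivAt f (2 * f (2 * y)) y)
    {c : ℝ} (hc : 0 < c) (σ : ℝ) {x : ℝ} (hx : x ∈ Ioo (-1) 1) :
    HasDerivAt (mirrorSum f (2 * c) (-σ)) (mirrorSum f c σ x / c) x := by
  have h2c : 0 < 2 * c := by positivity
  have hplus := (hd ((1 + x) / (2 * c)) (div_pos (by linarith [hx.1]) h2c)).comp x
    (((hasDerivAt_id' x).const_add 1).div_const (2 * c))
  have hminus := (hd ((1 - x) / (2 * c)) (div_pos (by linarith [hx.2]) h2c)).comp x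
    (((hasDerivAt_id' x).const_sub 1).div_const (2 * c))
  refine HasDerivAt.congr_deriv (f := mirrorSum f (2 * c) (-σ))
    (hplus.add (hminus.const_mul (-σ))) ?_
  simp only [mirrorSum]
  field_simp

lemma mirrorSum_eq_add_integral (hcont : ContinuousOn f (Ici 0))
    (hd : ∀ y : ℝ, 0 < y → HasDerivAt f (2 * f (2 * y)) y) (c σ : ℝ) (hc : 0 < c)
    {p : ℝ → ℝ} (hp : ∀ t ∈ Icc (0:ℝ) 1, mirrorSum f c σ t = p t)
    {x : ℝ} (hx : x ∈ Icc (0:ℝ) 1) :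
    mirrorSum f (2 * c) (-σ) x = (1 - σ) * f (1 / (2 * c)) + (∫ t in (0:ℝ)..x, p t) / c := by
  have hsub : Icc 0 x ⊆ Icc (-1) 1 := Icc_subset_Icc (by norm_num) hx.2
  have hFTC := integral_eq_sub_of_hasDerivAt_of_le hx.1
    ((continuousOn_mirrorSum hcont (by positivity) (-σ)).mono hsub)
    (fun t ht => hasDerivAt_mirrorSum hd hc σ (Ioo_subset_Ioo (by norm_num) hx.2 ht))
    (((continuousOn_mirrorSum hcont hc σ).mono hsub).intervalIntegrable_of_Icc hx.1 |>.div_const c)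
  have hpx : ∫ t in (0:ℝ)..x, mirrorSum f c σ t = ∫ t in (0:ℝ)..x, p t :=
    integral_congr fun t ht => hp t (Icc_subset_Icc le_rfl hx.2 (by rwa [uIcc_of_le hx.1] at ht))
  simp only [intervalIntegral.integral_div, hpx, mirrorSum_zero] at hFTC
  linarith

lemma mirrorSum_two_one (hsym : ∀ x : ℝ, 0 ≤ x → x ≤ 1 → f x + f (1 - x) = 1)
    {x : ℝ} (hx : x ∈ Icc (-1 : ℝ) 1) : mirrorSum f 2 1 x = 1 := by
  have h := hsym ((1 - x) / 2) (by linarith [hx.2]) (by linarith [hx.1])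
  rw [show 1 - (1 - x) / 2 = (1 + x) / 2 by ring] at h
  simp only [mirrorSum]
  linarith

lemma mirrorSum_sixteen (hcont : ContinuousOn f (Ici 0))
    (hd : ∀ y : ℝ, 0 < y → HasDerivAt f (2 * f (2 * y)) y)
    (hsym : ∀ x : ℝ, 0 ≤ x → x ≤ 1 → f x + f (1 - x) = 1) :
    ∀ x ∈ Icc (0:ℝ) 1, mirrorSum f 16 (-1) x = x * f (1 / 8) / 4 + x ^ 3 / 384 := by
  have h2 : ∀ t ∈ Icc (0:ℝ) 1, mirrorSum f 2 1 t = 1 := fun t ht =>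
    mirrorSum_two_one hsym ⟨by linarith [ht.1], ht.2⟩
  have h4 : ∀ t ∈ Icc (0:ℝ) 1, mirrorSum f 4 (-1) t = t / 2 := fun t ht => by
    have := mirrorSum_eq_add_integral hcont hd 2 1 (by norm_num) h2 ht
    norm_num at this
    linarith
  have h8 : ∀ t ∈ Icc (0:ℝ) 1, mirrorSum f 8 1 t = 2 * f (1 / 8) + t ^ 2 / 16 :=
    fun t ht => by
      have := mirrorSum_eq_add_integral hcont hd 4 (-1) (by norm_num) h4 ht
      norm_num at this
      linarith
  intro x hx
  have := mirrorSum_eq_add_integral hcont hd 8 1 (by norm_num) h8 hx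
  norm_num at this
  linarith

lemma mirrorSum_thirtytwo (hcont : ContinuousOn f (Ici 0))
    (hd : ∀ y : ℝ, 0 < y → HasDerivAt f (2 * f (2 * y)) y)
    (hsym : ∀ x : ℝ, 0 ≤ x → x ≤ 1 → f x + f (1 - x) = 1) (h0 : f 0 = 0) :
    ∀ x ∈ Icc (0:ℝ) 1,
      mirrorSum f 32 1 x = 2 * f (1 / 32) + x ^ 2 / 36864 + x ^ 4 / 24576 := by
  have h16 := mirrorSum_sixteen hcont hd hsym
  have hf8 : f (1 / 8) = 1 / 288 := by
    have := h16 1 (by norm_num)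
    norm_num [mirrorSum, h0] at this
    linarith
  intro x hx
  have := mirrorSum_eq_add_integral hcont hd 16 (-1) (by norm_num) h16 hx
  simp (disch := apply Continuous.intervalIntegrable; fun_prop) [integral_add] at this
  norm_num [hf8] at this
  linarith

end

theorem fabius_stmt_4 (f : ℝ → ℝ)
    (hcont : ContinuousOn f (Set.Ici 0))
    (hsym : ∀ x : ℝ, 0 ≤ x → x ≤ 1 → f x + f (1 - x) = 1)
    (hint : ∀ x : ℝ, 0 ≤ x → f x = ∫ t in (0:ℝ)..(2 * x), f t) :
    ∀ x : ℝ, 0 ≤ x → x ≤ 1 →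
      2 ^ 13 * (f ((1 + x) / 32) + f ((1 - x) / 32)) = 19 / 2025 + (2 / 9) * x ^ 2 + (1 / 3) * x ^ 4 := by
  have hd := fun y => hasDerivAt_of_eq_integral_two_mul hcont hint (y := y)
  have h0 : f 0 = 0 := by simpa using hint 0 le_rfl
  have h32 := mirrorSum_thirtytwo hcont hd hsym h0
  have h64 : mirrorSum f 64 (-1) 1 = f (1 / 32) / 16 + 1 / 3538944 + 1 / 3932160 := by
    have := mirrorSum_eq_add_integral hcont hd 32 1 (by norm_num) h32 (x := 1) (by norm_num)
    simp (disch := apply Continuous.intervalIntegrable; fun_prop) [integral_add] at this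
    norm_num at this
    linarith
  have hf32 : f (1 / 32) = 19 / 33177600 := by
    norm_num [mirrorSum, h0] at h64
    linarith
  intro x hx0 hx1
  have h := h32 x ⟨hx0, hx1⟩
  rw [mirrorSum, one_mul, hf32] at h
  rw [h]
  ring
end

section
/- For all real x with 0 ≤ x ≤ 1, one has 2²⁵·(f((1+x)/128) + f((1−x)/128)) = 583/2679075 + (19/2025)x² + (1/27)x⁴ + (1/45)x⁶. -/
open scoped BigOperators


open MeasureTheory intervalIntegral

-- interval integrability of f on nonneg intervals
lemma fabAux_int (f : ℝ → ℝ) (hcont : ContinuousOn f (Set.Ici 0)) {a b : ℝ}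
    (ha : 0 ≤ a) (hb : 0 ≤ b) : IntervalIntegrable f volume a b := by
  apply ContinuousOn.intervalIntegrable
  apply hcont.mono
  intro t ht
  rcases Set.mem_uIcc.mp ht with ⟨h1, _⟩ | ⟨h1, _⟩ <;> exact Set.mem_Ici.mpr (by linarith)

lemma fabAux_intP (f : ℝ → ℝ) (hcont : ContinuousOn f (Set.Ici 0)) {c : ℝ} (hc : 0 < c)
    {a b : ℝ} (ha : -1 ≤ a) (hb : -1 ≤ b) :
    IntervalIntegrable (fun u => f ((1 + u) / c)) volume a b := by
  apply ContinuousOn.intervalIntegrable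
  apply hcont.comp (Continuous.continuousOn (by fun_prop))
  intro u hu
  rcases Set.mem_uIcc.mp hu with ⟨h1, _⟩ | ⟨h1, _⟩ <;>
    exact Set.mem_Ici.mpr (div_nonneg (by linarith) hc.le)

lemma fabAux_intM (f : ℝ → ℝ) (hcont : ContinuousOn f (Set.Ici 0)) {c : ℝ} (hc : 0 < c)
    {a b : ℝ} (ha : a ≤ 1) (hb : b ≤ 1) :
    IntervalIntegrable (fun u => f ((1 - u) / c)) volume a b := by
  apply ContinuousOn.intervalIntegrable
  apply hcont.comp (Continuous.continuousOn (by fun_prop))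
  intro u hu
  rcases Set.mem_uIcc.mp hu with ⟨_, h2⟩ | ⟨_, h2⟩ <;>
    exact Set.mem_Ici.mpr (div_nonneg (by linarith) hc.le)

-- substitution
lemma fabAux_subst (f : ℝ → ℝ) (c a b : ℝ) (hc : c ≠ 0) :
    (∫ u in a..b, f ((1 + u) / c)) = c * ∫ t in ((1 + a) / c)..((1 + b) / c), f t := by
  have h : ∀ u : ℝ, (1 + u) / c = c⁻¹ * u + c⁻¹ := fun u => by field_simp; ring
  simp only [h]
  rw [intervalIntegral.integral_comp_mul_add f (inv_ne_zero hc) c⁻¹, inv_inv, smul_eq_mul]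


-- reflection
lemma fabAux_refl (f : ℝ → ℝ) (c x : ℝ) :
    (∫ u in (0:ℝ)..x, f ((1 - u) / c)) = ∫ u in (-x)..(0:ℝ), f ((1 + u) / c) := by
  have h : ∀ u : ℝ, f ((1 - u) / c) = (fun v => f ((1 + v) / c)) (-u) := fun u => by
    simp only []
    norm_num [sub_eq_add_neg]
  simp only [h]
  rw [intervalIntegral.integral_comp_neg (fun v => f ((1 + v) / c))]
  norm_num

lemma fabLemA (f : ℝ → ℝ) (hcont : ContinuousOn f (Set.Ici 0))
    (hint : ∀ x : ℝ, 0 ≤ x → f x = ∫ t in (0:ℝ)..(2 * x), f t)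
    (c : ℝ) (hc : 0 < c) (x : ℝ) (hx0 : 0 ≤ x) (hx1 : x ≤ 1) :
    f ((1 + x) / (2 * c)) - f ((1 - x) / (2 * c))
      = (1 / c) * ∫ u in (0:ℝ)..x, (f ((1 + u) / c) + f ((1 - u) / c)) := by
  have hcne : c ≠ 0 := ne_of_gt hc
  have hc2 : (0:ℝ) < 2 * c := by linarith
  have h1 : f ((1 + x) / (2 * c)) = ∫ t in (0:ℝ)..((1 + x) / c), f t := by
    rw [hint _ (div_nonneg (by linarith) hc2.le)]
    congr 1
    field_simp
    try ring
  have h2 : f ((1 - x) / (2 * c)) = ∫ t in (0:ℝ)..((1 - x) / c), f t := by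
    rw [hint _ (div_nonneg (by linarith) hc2.le)]
    congr 1
    field_simp
    try ring
  have h3 : f ((1 + x) / (2 * c)) - f ((1 - x) / (2 * c))
      = ∫ t in ((1 - x) / c)..((1 + x) / c), f t := by
    rw [h1, h2]
    exact intervalIntegral.integral_interval_sub_left
      (fabAux_int f hcont le_rfl (div_nonneg (by linarith) hc.le))
      (fabAux_int f hcont le_rfl (div_nonneg (by linarith) hc.le))
  have h4 : (∫ u in (-x)..x, f ((1 + u) / c))
      = c * ∫ t in ((1 - x) / c)..((1 + x) / c), f t := by
    rw [fabAux_subst f c (-x) x hcne, show (1 + -x) / c = (1 - x) / c by ring]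
  have h5 : (∫ u in (-x)..x, f ((1 + u) / c))
      = (∫ u in (-x)..(0:ℝ), f ((1 + u) / c)) + ∫ u in (0:ℝ)..x, f ((1 + u) / c) :=
    (intervalIntegral.integral_add_adjacent_intervals
      (fabAux_intP f hcont hc (by linarith) (by norm_num))
      (fabAux_intP f hcont hc (by norm_num) (by linarith))).symm
  have h7 : (∫ u in (0:ℝ)..x, (f ((1 + u) / c) + f ((1 - u) / c)))
      = (∫ u in (0:ℝ)..x, f ((1 + u) / c)) + ∫ u in (0:ℝ)..x, f ((1 - u) / c) :=
    intervalIntegral.integral_add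
      (fabAux_intP f hcont hc (by norm_num) (by linarith))
      (fabAux_intM f hcont hc (by norm_num) (by linarith))
  have h8 : (∫ t in ((1 - x) / c)..((1 + x) / c), f t)
      = (1 / c) * ((∫ u in (-x)..(0:ℝ), f ((1 + u) / c)) + ∫ u in (0:ℝ)..x, f ((1 + u) / c)) := by
    rw [← h5, h4]
    field_simp
  rw [h3, h8, h7, fabAux_refl f c x]
  ring

lemma fabLemB (f : ℝ → ℝ) (hcont : ContinuousOn f (Set.Ici 0))
    (hint : ∀ x : ℝ, 0 ≤ x → f x = ∫ t in (0:ℝ)..(2 * x), f t)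
    (c : ℝ) (hc : 0 < c) (x : ℝ) (hx0 : 0 ≤ x) (hx1 : x ≤ 1) :
    f ((1 + x) / (2 * c)) + f ((1 - x) / (2 * c))
      = 2 * f (1 / (2 * c)) + (1 / c) * ∫ u in (0:ℝ)..x, (f ((1 + u) / c) - f ((1 - u) / c)) := by
  have hcne : c ≠ 0 := ne_of_gt hc
  have hc2 : (0:ℝ) < 2 * c := by linarith
  have h1 : f ((1 + x) / (2 * c)) = ∫ t in (0:ℝ)..((1 + x) / c), f t := by
    rw [hint _ (div_nonneg (by linarith) hc2.le)]
    congr 1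
    field_simp
    try ring
  have h2 : f ((1 - x) / (2 * c)) = ∫ t in (0:ℝ)..((1 - x) / c), f t := by
    rw [hint _ (div_nonneg (by linarith) hc2.le)]
    congr 1
    field_simp
    try ring
  have h0 : f (1 / (2 * c)) = ∫ t in (0:ℝ)..(1 / c), f t := by
    rw [hint _ (div_nonneg zero_le_one hc2.le)]
    congr 1
    field_simp
    try ring
  have hA : f ((1 + x) / (2 * c)) - f (1 / (2 * c)) = ∫ t in (1 / c)..((1 + x) / c), f t := by
    rw [h1, h0]
    exact intervalIntegral.integral_interval_sub_left
      (fabAux_int f hcont le_rfl (div_nonneg (by linarith) hc.le))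
      (fabAux_int f hcont le_rfl (div_nonneg zero_le_one hc.le))
  have hB : f ((1 - x) / (2 * c)) - f (1 / (2 * c)) = ∫ t in (1 / c)..((1 - x) / c), f t := by
    rw [h2, h0]
    exact intervalIntegral.integral_interval_sub_left
      (fabAux_int f hcont le_rfl (div_nonneg (by linarith) hc.le))
      (fabAux_int f hcont le_rfl (div_nonneg zero_le_one hc.le))
  have e1 : (∫ u in (0:ℝ)..x, f ((1 + u) / c))
      = c * (f ((1 + x) / (2 * c)) - f (1 / (2 * c))) := by
    rw [fabAux_subst f c 0 x hcne, hA]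
    norm_num
  have e2 : (∫ u in (0:ℝ)..x, f ((1 - u) / c))
      = -(c * (f ((1 - x) / (2 * c)) - f (1 / (2 * c)))) := by
    rw [fabAux_refl f c x, fabAux_subst f c (-x) 0 hcne, hB,
      show (1 + -x) / c = (1 - x) / c by ring, show (1 + (0:ℝ)) / c = 1 / c by norm_num,
      intervalIntegral.integral_symm]
    ring
  have h7 : (∫ u in (0:ℝ)..x, (f ((1 + u) / c) - f ((1 - u) / c)))
      = (∫ u in (0:ℝ)..x, f ((1 + u) / c)) - ∫ u in (0:ℝ)..x, f ((1 - u) / c) :=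
    intervalIntegral.integral_sub
      (fabAux_intP f hcont hc (by norm_num) (by linarith))
      (fabAux_intM f hcont hc (by norm_num) (by linarith))
  rw [h7, e1, e2]
  field_simp
  ring

lemma fabPolyInt (x c0 c1 c2 c3 c4 c5 c6 : ℝ) :
    (∫ u in (0:ℝ)..x, (c0 + c1 * u ^ 1 + c2 * u ^ 2 + c3 * u ^ 3 + c4 * u ^ 4 + c5 * u ^ 5 + c6 * u ^ 6))
      = c0 * x + c1 * x ^ (1+1) / (1+1) + c2 * x ^ 3 / 3 + c3 * x ^ 4 / 4 + c4 * x ^ 5 / 5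
        + c5 * x ^ 6 / 6 + c6 * x ^ 7 / 7 := by
  have ii : ∀ g : ℝ → ℝ, Continuous g → IntervalIntegrable g volume 0 x := fun g hg =>
    hg.intervalIntegrable 0 x
  rw [intervalIntegral.integral_add (ii _ (by fun_prop)) (ii _ (by fun_prop)),
    intervalIntegral.integral_add (ii _ (by fun_prop)) (ii _ (by fun_prop)),
    intervalIntegral.integral_add (ii _ (by fun_prop)) (ii _ (by fun_prop)),
    intervalIntegral.integral_add (ii _ (by fun_prop)) (ii _ (by fun_prop)),
    intervalIntegral.integral_add (ii _ (by fun_prop)) (ii _ (by fun_prop)),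
    intervalIntegral.integral_add (ii _ (by fun_prop)) (ii _ (by fun_prop))]
  simp only [intervalIntegral.integral_const_mul, integral_pow, intervalIntegral.integral_const, smul_eq_mul]
  norm_num
  ring

theorem fabius_stmt_6 (f : ℝ → ℝ)
    (hcont : ContinuousOn f (Set.Ici 0))
    (hsym : ∀ x : ℝ, 0 ≤ x → x ≤ 1 → f x + f (1 - x) = 1)
    (hint : ∀ x : ℝ, 0 ≤ x → f x = ∫ t in (0:ℝ)..(2 * x), f t) :
    ∀ x : ℝ, 0 ≤ x → x ≤ 1 →
      2 ^ 25 * (f ((1 + x) / 128) + f ((1 - x) / 128)) = 583 / 2679075 + (19 / 2025) * x ^ 2 + (1 / 27) * x ^ 4 + (1 / 45) * x ^ 6 := by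
  have hf0 : f 0 = 0 := by
    have h := hint 0 le_rfl
    simpa using h
  have hS1 : ∀ u : ℝ, 0 ≤ u → u ≤ 1 → f ((1 + u) / 2) + f ((1 - u) / 2) = 1 := by
    intro u h0 h1
    have h := hsym ((1 + u) / 2) (by linarith) (by linarith)
    rwa [show 1 - (1 + u) / 2 = (1 - u) / 2 by ring] at h
  have hD2 : ∀ x : ℝ, 0 ≤ x → x ≤ 1 → f ((1 + x) / 4) - f ((1 - x) / 4) = x / 2 := by
    intro x h0 h1
    have h := fabLemA f hcont hint 2 (by norm_num) x h0 h1
    rw [show (2:ℝ) * 2 = 4 by norm_num] at h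
    have hcg : Set.EqOn (fun u : ℝ => f ((1 + u) / 2) + f ((1 - u) / 2))
        (fun u : ℝ => (1:ℝ) + 0 * u ^ 1 + 0 * u ^ 2 + 0 * u ^ 3 + 0 * u ^ 4 + 0 * u ^ 5 + 0 * u ^ 6)
        (Set.uIcc 0 x) := by
      intro u hu
      have hu1 : 0 ≤ u ∧ u ≤ 1 := by
        rcases Set.mem_uIcc.mp hu with ⟨a, b⟩ | ⟨a, b⟩ <;> exact ⟨by linarith, by linarith⟩
      simp only []
      rw [hS1 u hu1.1 hu1.2]
      ring
    rw [h, intervalIntegral.integral_congr hcg, fabPolyInt]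
    ring
  have hS3 : ∀ x : ℝ, 0 ≤ x → x ≤ 1 →
      f ((1 + x) / 8) + f ((1 - x) / 8) = 2 * f (1 / 8) + x ^ 2 / 16 := by
    intro x h0 h1
    have h := fabLemB f hcont hint 4 (by norm_num) x h0 h1
    rw [show (2:ℝ) * 4 = 8 by norm_num] at h
    have hcg : Set.EqOn (fun u : ℝ => f ((1 + u) / 4) - f ((1 - u) / 4))
        (fun u : ℝ => (0:ℝ) + (1/2) * u ^ 1 + 0 * u ^ 2 + 0 * u ^ 3 + 0 * u ^ 4 + 0 * u ^ 5 + 0 * u ^ 6)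
        (Set.uIcc 0 x) := by
      intro u hu
      have hu1 : 0 ≤ u ∧ u ≤ 1 := by
        rcases Set.mem_uIcc.mp hu with ⟨a, b⟩ | ⟨a, b⟩ <;> exact ⟨by linarith, by linarith⟩
      simp only []
      rw [hD2 u hu1.1 hu1.2]
      ring
    rw [h, intervalIntegral.integral_congr hcg, fabPolyInt]
    ring
  have hval8 : f (1 / 8) = 1 / 288 := by
    have h := fabLemA f hcont hint 8 (by norm_num) 1 zero_le_one le_rfl
    rw [show ((1:ℝ) + 1) / (2 * 8) = 1 / 8 by norm_num,
      show ((1:ℝ) - 1) / (2 * 8) = 0 by norm_num, hf0] at h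
    have hcg : Set.EqOn (fun u : ℝ => f ((1 + u) / 8) + f ((1 - u) / 8))
        (fun u : ℝ => (2 * f (1 / 8)) + 0 * u ^ 1 + (1/16) * u ^ 2 + 0 * u ^ 3 + 0 * u ^ 4 + 0 * u ^ 5 + 0 * u ^ 6)
        (Set.uIcc 0 1) := by
      intro u hu
      have hu1 : 0 ≤ u ∧ u ≤ 1 := by
        rcases Set.mem_uIcc.mp hu with ⟨a, b⟩ | ⟨a, b⟩ <;> exact ⟨by linarith, by linarith⟩
      simp only []
      rw [hS3 u hu1.1 hu1.2]
      ring
    rw [intervalIntegral.integral_congr hcg, fabPolyInt] at h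
    norm_num at h
    linarith
  have hS3' : ∀ x : ℝ, 0 ≤ x → x ≤ 1 →
      f ((1 + x) / 8) + f ((1 - x) / 8) = 1 / 144 + x ^ 2 / 16 := by
    intro x h0 h1
    rw [hS3 x h0 h1, hval8]
    norm_num
  have hD4 : ∀ x : ℝ, 0 ≤ x → x ≤ 1 →
      f ((1 + x) / 16) - f ((1 - x) / 16) = x / 1152 + x ^ 3 / 384 := by
    intro x h0 h1
    have h := fabLemA f hcont hint 8 (by norm_num) x h0 h1
    rw [show (2:ℝ) * 8 = 16 by norm_num] at h
    have hcg : Set.EqOn (fun u : ℝ => f ((1 + u) / 8) + f ((1 - u) / 8))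
        (fun u : ℝ => (1/144 : ℝ) + 0 * u ^ 1 + (1/16) * u ^ 2 + 0 * u ^ 3 + 0 * u ^ 4 + 0 * u ^ 5 + 0 * u ^ 6)
        (Set.uIcc 0 x) := by
      intro u hu
      have hu1 : 0 ≤ u ∧ u ≤ 1 := by
        rcases Set.mem_uIcc.mp hu with ⟨a, b⟩ | ⟨a, b⟩ <;> exact ⟨by linarith, by linarith⟩
      simp only []
      rw [hS3' u hu1.1 hu1.2]
      ring
    rw [h, intervalIntegral.integral_congr hcg, fabPolyInt]
    ring
  have hS5 : ∀ x : ℝ, 0 ≤ x → x ≤ 1 →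
      f ((1 + x) / 32) + f ((1 - x) / 32)
        = 2 * f (1 / 32) + x ^ 2 / 36864 + x ^ 4 / 24576 := by
    intro x h0 h1
    have h := fabLemB f hcont hint 16 (by norm_num) x h0 h1
    rw [show (2:ℝ) * 16 = 32 by norm_num] at h
    have hcg : Set.EqOn (fun u : ℝ => f ((1 + u) / 16) - f ((1 - u) / 16))
        (fun u : ℝ => (0:ℝ) + (1/1152) * u ^ 1 + 0 * u ^ 2 + (1/384) * u ^ 3 + 0 * u ^ 4 + 0 * u ^ 5 + 0 * u ^ 6)
        (Set.uIcc 0 x) := by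
      intro u hu
      have hu1 : 0 ≤ u ∧ u ≤ 1 := by
        rcases Set.mem_uIcc.mp hu with ⟨a, b⟩ | ⟨a, b⟩ <;> exact ⟨by linarith, by linarith⟩
      simp only []
      rw [hD4 u hu1.1 hu1.2]
      ring
    rw [h, intervalIntegral.integral_congr hcg, fabPolyInt]
    ring
  have hval32 : f (1 / 32) = 19 / 33177600 := by
    have h := fabLemA f hcont hint 32 (by norm_num) 1 zero_le_one le_rfl
    rw [show ((1:ℝ) + 1) / (2 * 32) = 1 / 32 by norm_num,
      show ((1:ℝ) - 1) / (2 * 32) = 0 by norm_num, hf0] at h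
    have hcg : Set.EqOn (fun u : ℝ => f ((1 + u) / 32) + f ((1 - u) / 32))
        (fun u : ℝ => (2 * f (1 / 32)) + 0 * u ^ 1 + (1/36864) * u ^ 2 + 0 * u ^ 3 + (1/24576) * u ^ 4 + 0 * u ^ 5 + 0 * u ^ 6)
        (Set.uIcc 0 1) := by
      intro u hu
      have hu1 : 0 ≤ u ∧ u ≤ 1 := by
        rcases Set.mem_uIcc.mp hu with ⟨a, b⟩ | ⟨a, b⟩ <;> exact ⟨by linarith, by linarith⟩
      simp only []
      rw [hS5 u hu1.1 hu1.2]
      ring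
    rw [intervalIntegral.integral_congr hcg, fabPolyInt] at h
    norm_num at h
    linarith
  have hS5' : ∀ x : ℝ, 0 ≤ x → x ≤ 1 →
      f ((1 + x) / 32) + f ((1 - x) / 32)
        = 19 / 16588800 + x ^ 2 / 36864 + x ^ 4 / 24576 := by
    intro x h0 h1
    rw [hS5 x h0 h1, hval32]
    norm_num
  have hD6 : ∀ x : ℝ, 0 ≤ x → x ≤ 1 →
      f ((1 + x) / 64) - f ((1 - x) / 64)
        = 19 * x / 530841600 + x ^ 3 / 3538944 + x ^ 5 / 3932160 := by
    intro x h0 h1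
    have h := fabLemA f hcont hint 32 (by norm_num) x h0 h1
    rw [show (2:ℝ) * 32 = 64 by norm_num] at h
    have hcg : Set.EqOn (fun u : ℝ => f ((1 + u) / 32) + f ((1 - u) / 32))
        (fun u : ℝ => (19/16588800 : ℝ) + 0 * u ^ 1 + (1/36864) * u ^ 2 + 0 * u ^ 3 + (1/24576) * u ^ 4 + 0 * u ^ 5 + 0 * u ^ 6)
        (Set.uIcc 0 x) := by
      intro u hu
      have hu1 : 0 ≤ u ∧ u ≤ 1 := by
        rcases Set.mem_uIcc.mp hu with ⟨a, b⟩ | ⟨a, b⟩ <;> exact ⟨by linarith, by linarith⟩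
      simp only []
      rw [hS5' u hu1.1 hu1.2]
      ring
    rw [h, intervalIntegral.integral_congr hcg, fabPolyInt]
    ring
  have hS7 : ∀ x : ℝ, 0 ≤ x → x ≤ 1 →
      f ((1 + x) / 128) + f ((1 - x) / 128)
        = 2 * f (1 / 128) + 19 * x ^ 2 / 67947724800 + x ^ 4 / 905969664 + x ^ 6 / 1509949440 := by
    intro x h0 h1
    have h := fabLemB f hcont hint 64 (by norm_num) x h0 h1
    rw [show (2:ℝ) * 64 = 128 by norm_num] at h
    have hcg : Set.EqOn (fun u : ℝ => f ((1 + u) / 64) - f ((1 - u) / 64))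
        (fun u : ℝ => (0:ℝ) + (19/530841600) * u ^ 1 + 0 * u ^ 2 + (1/3538944) * u ^ 3 + 0 * u ^ 4 + (1/3932160) * u ^ 5 + 0 * u ^ 6)
        (Set.uIcc 0 x) := by
      intro u hu
      have hu1 : 0 ≤ u ∧ u ≤ 1 := by
        rcases Set.mem_uIcc.mp hu with ⟨a, b⟩ | ⟨a, b⟩ <;> exact ⟨by linarith, by linarith⟩
      simp only []
      rw [hD6 u hu1.1 hu1.2]
      ring
    rw [h, intervalIntegral.integral_congr hcg, fabPolyInt]
    ring
  have hval128 : f (1 / 128) = 583 / 179789679820800 := by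
    have h := fabLemA f hcont hint 128 (by norm_num) 1 zero_le_one le_rfl
    rw [show ((1:ℝ) + 1) / (2 * 128) = 1 / 128 by norm_num,
      show ((1:ℝ) - 1) / (2 * 128) = 0 by norm_num, hf0] at h
    have hcg : Set.EqOn (fun u : ℝ => f ((1 + u) / 128) + f ((1 - u) / 128))
        (fun u : ℝ => (2 * f (1 / 128)) + 0 * u ^ 1 + (19/67947724800) * u ^ 2 + 0 * u ^ 3 + (1/905969664) * u ^ 4 + 0 * u ^ 5 + (1/1509949440) * u ^ 6)
        (Set.uIcc 0 1) := by
      intro u hu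
      have hu1 : 0 ≤ u ∧ u ≤ 1 := by
        rcases Set.mem_uIcc.mp hu with ⟨a, b⟩ | ⟨a, b⟩ <;> exact ⟨by linarith, by linarith⟩
      simp only []
      rw [hS7 u hu1.1 hu1.2]
      ring
    rw [intervalIntegral.integral_congr hcg, fabPolyInt] at h
    norm_num at h
    linarith
  intro x hx0 hx1
  rw [hS7 x hx0 hx1, hval128]
  ring
end

section
/- For all real x with 0 ≤ x ≤ 1, one has 2⁴¹·(f((1+x)/512) + f((1−x)/512)) = 132809/40989847500 + (583/2679075)x² + (19/12150)x⁴ + (1/405)x⁶ + (1/1260)x⁸. -/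
/-!
Write `gₙ(x) = f((1 + x)/2ⁿ) - (-1)ⁿ f((1 - x)/2ⁿ)`. The equation `f(y) = ∫₀^{2y} f` and a change
of variables give `gₙ₊₁(x) = gₙ₊₁(0) + 2⁻ⁿ ∫₀ˣ gₙ` on `[-1, 1]`, and `g₁ = 1` by the symmetry of `f`,
so every `gₙ` is a polynomial there. Its constant term `gₙ(0)` vanishes for even `n` and is
`2 f(2⁻ⁿ)` for odd `n`; since `gₙ₊₁(1) = f(2⁻ⁿ)`, the recursion at `x = 1` is a linear equation for
`f(2⁻ⁿ)`, solvable once `n > 1`. Running the recursion with exact rational coefficients up to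
`g₉` gives the claim.
-/

open Set intervalIntegral

/-- Polynomials are coefficient lists over `ℚ`, constant term first, so that the kernel can
compute `fabiusCoeffs`. -/
noncomputable def evalCoeffs : List ℚ → ℝ → ℝ
  | [], _ => 0
  | a :: p, x => a + x * evalCoeffs p x

def antiderivCoeffsAux : ℕ → List ℚ → List ℚ
  | _, [] => []
  | k, a :: p => a / (k + 1) :: antiderivCoeffsAux (k + 1) p

def antiderivCoeffs (c : ℚ) (p : List ℚ) : List ℚ := c :: antiderivCoeffsAux 0 p

theorem continuous_evalCoeffs (p : List ℚ) : Continuous (evalCoeffs p) := by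
  induction p with
  | nil => exact continuous_const
  | cons a p ih => exact continuous_const.add (continuous_id.mul ih)

theorem evalCoeffs_map_div (p : List ℚ) (r : ℚ) (x : ℝ) :
    evalCoeffs (p.map (· / r)) x = evalCoeffs p x / r := by
  induction p with
  | nil => simp [evalCoeffs]
  | cons a p ih => simp only [List.map_cons, evalCoeffs, ih]; push_cast; ring

theorem evalCoeffs_one (p : List ℚ) : evalCoeffs p 1 = p.sum := by
  induction p with
  | nil => simp [evalCoeffs]
  | cons a p ih => simp [evalCoeffs, ih]

theorem hasDerivAt_pow_mul_evalCoeffs_antiderivCoeffsAux (k : ℕ) (p : List ℚ) (x : ℝ) :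
    HasDerivAt (fun y => y ^ (k + 1) * evalCoeffs (antiderivCoeffsAux k p) y)
      (x ^ k * evalCoeffs p x) x := by
  induction p generalizing k with
  | nil => simpa [antiderivCoeffsAux, evalCoeffs] using hasDerivAt_const x (0 : ℝ)
  | cons a p ih =>
    have h := ((hasDerivAt_pow (k + 1) x).const_mul ((a : ℝ) / (k + 1))).add (ih (k + 1))
    have hfun : (fun y => y ^ (k + 1) * evalCoeffs (antiderivCoeffsAux k (a :: p)) y) =
        (fun y => (a : ℝ) / (k + 1) * y ^ (k + 1)) +
          fun y => y ^ (k + 1 + 1) * evalCoeffs (antiderivCoeffsAux (k + 1) p) y := by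
      funext y; simp only [antiderivCoeffsAux, evalCoeffs, Pi.add_apply]; push_cast; ring
    rw [hfun]
    refine h.congr_deriv ?_
    rw [Nat.add_sub_cancel, evalCoeffs]
    push_cast
    field_simp
    ring

theorem evalCoeffs_antiderivCoeffs (c : ℚ) (p : List ℚ) (x : ℝ) :
    evalCoeffs (antiderivCoeffs c p) x = c + ∫ t in 0..x, evalCoeffs p t := by
  have hderiv (y : ℝ) : HasDerivAt (evalCoeffs (antiderivCoeffs c p)) (evalCoeffs p y) y := by
    simpa [antiderivCoeffs, evalCoeffs] using
      (hasDerivAt_pow_mul_evalCoeffs_antiderivCoeffsAux 0 p y).const_add (c : ℝ)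
  rw [integral_eq_sub_of_hasDerivAt (fun y _ => hderiv y)
    ((continuous_evalCoeffs p).intervalIntegrable 0 x)]
  simp [antiderivCoeffs, evalCoeffs]

def fabiusCoeffs : ℕ → List ℚ
  | 0 => [1]
  | m + 1 =>
    let p := (fabiusCoeffs m).map (· / 2 ^ (m + 1))
    -- the constant term `2 f(2^-(m+2))` at odd index `m + 2`, solved for in `fabius_one_div_two_pow`
    antiderivCoeffs
      (if Even m then 0 else 2 * (antiderivCoeffs 0 (antiderivCoeffs 0 p)).sum / (2 ^ (m + 2) - 2)) p

theorem fabiusCoeffs_eight : fabiusCoeffs 8 = [132809 / 90137627894030008320000, 0,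
    583 / 5891348228367974400, 0, 19 / 26718132554956800, 0, 1 / 890604418498560, 0,
    1 / 2770769301995520] := by
  decide +kernel

noncomputable def fabiusComb (f : ℝ → ℝ) (n : ℕ) (x : ℝ) : ℝ :=
  f ((1 + x) / 2 ^ n) - (-1) ^ n * f ((1 - x) / 2 ^ n)

section Fabius

variable {f : ℝ → ℝ}

theorem fabius_zero (hint : ∀ x : ℝ, 0 ≤ x → f x = ∫ t in (0:ℝ)..(2 * x), f t) : f 0 = 0 := by
  simpa using hint 0 le_rfl

theorem fabius_sub_eq_integral (hcont : ContinuousOn f (Ici 0))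
    (hint : ∀ x : ℝ, 0 ≤ x → f x = ∫ t in (0:ℝ)..(2 * x), f t) {u v : ℝ} (hu : 0 ≤ u) (hv : 0 ≤ v) :
    f (v / 2) - f (u / 2) = ∫ t in u..v, f t := by
  have hI {w : ℝ} (hw : 0 ≤ w) : IntervalIntegrable f MeasureTheory.volume 0 w :=
    (hcont.mono (by rw [uIcc_of_le hw]; exact Icc_subset_Ici_self)).intervalIntegrable
  rw [hint _ (by positivity), hint (u / 2) (by positivity), mul_div_cancel₀ _ two_ne_zero,
    mul_div_cancel₀ _ two_ne_zero]
  exact integral_interval_sub_left (hI hv) (hI hu)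

theorem fabius_comp_sub_eq_integral (hcont : ContinuousOn f (Ici 0))
    (hint : ∀ x : ℝ, 0 ≤ x → f x = ∫ t in (0:ℝ)..(2 * x), f t) {c y : ℝ} (hc : 0 < c)
    (hy : -1 ≤ y) :
    f ((1 + y) / (2 * c)) - f (1 / (2 * c)) = (∫ s in 0..y, f ((1 + s) / c)) / c := by
  have hsub : (fun s => f ((1 + s) / c)) = fun s => f (s / c + 1 / c) := by
    funext s; ring_nf
  rw [hsub, integral_comp_div_add f hc.ne', smul_eq_mul, mul_div_cancel_left₀ _ hc.ne',
    ← fabius_sub_eq_integral hcont hint (by positivity)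
      (by rw [← add_div, add_comm]; exact div_nonneg (by linarith) hc.le)]
  ring_nf

theorem fabiusComb_one (hsym : ∀ x : ℝ, 0 ≤ x → x ≤ 1 → f x + f (1 - x) = 1) {x : ℝ}
    (hx : x ∈ Icc (-1 : ℝ) 1) : fabiusComb f 1 x = 1 := by
  have h := hsym ((1 + x) / 2) (by linarith [hx.1]) (by linarith [hx.2])
  rw [show 1 - (1 + x) / 2 = (1 - x) / 2 by ring] at h
  simpa [fabiusComb] using h

theorem intervalIntegrable_comp_of_nonneg (hcont : ContinuousOn f (Ici 0)) {g : ℝ → ℝ}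
    (hg : Continuous g) (hpos : ∀ s ∈ Icc (-1 : ℝ) 1, 0 ≤ g s) {x : ℝ} (hx : x ∈ Icc (-1 : ℝ) 1) :
    IntervalIntegrable (fun s => f (g s)) MeasureTheory.volume 0 x :=
  (hcont.comp hg.continuousOn fun s hs =>
    hpos s (uIcc_subset_Icc ⟨by norm_num, by norm_num⟩ hx hs)).intervalIntegrable

theorem fabiusComb_succ (hcont : ContinuousOn f (Ici 0))
    (hint : ∀ x : ℝ, 0 ≤ x → f x = ∫ t in (0:ℝ)..(2 * x), f t) (n : ℕ) {x : ℝ}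
    (hx : x ∈ Icc (-1 : ℝ) 1) :
    fabiusComb f (n + 1) x = fabiusComb f (n + 1) 0 + (∫ t in 0..x, fabiusComb f n t) / 2 ^ n := by
  have hc : (0 : ℝ) < 2 ^ n := by positivity
  have hplus := fabius_comp_sub_eq_integral hcont hint hc hx.1
  have hminus := fabius_comp_sub_eq_integral hcont hint hc (y := -x) (by linarith [hx.2])
  have hneg : ∫ s in 0..-x, f ((1 + s) / 2 ^ n) = -∫ s in 0..x, f ((1 - s) / 2 ^ n) := by
    simp only [sub_eq_add_neg, integral_comp_neg (fun s => f ((1 + s) / 2 ^ n)), neg_zero]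
    exact integral_symm _ _
  have hsplit : ∫ t in 0..x, fabiusComb f n t =
      (∫ s in 0..x, f ((1 + s) / 2 ^ n)) - (-1) ^ n * ∫ s in 0..x, f ((1 - s) / 2 ^ n) := by
    rw [← integral_const_mul]
    refine integral_sub ?_ (IntervalIntegrable.const_mul ?_ _) <;>
      refine intervalIntegrable_comp_of_nonneg hcont (by fun_prop) (fun s hs => ?_) hx <;>
      exact div_nonneg (by linarith [hs.1, hs.2]) hc.le
  rw [hneg, ← sub_eq_add_neg] at hminus
  rw [hsplit]
  simp only [fabiusComb, pow_succ', add_zero, sub_zero]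
  linear_combination hplus + (-1) ^ n * hminus

theorem fabiusComb_succ_of_eqOn (hcont : ContinuousOn f (Ici 0))
    (hint : ∀ x : ℝ, 0 ≤ x → f x = ∫ t in (0:ℝ)..(2 * x), f t) {n : ℕ} {P : List ℚ}
    (hP : EqOn (fabiusComb f n) (evalCoeffs P) (Icc (-1) 1)) {x : ℝ} (hx : x ∈ Icc (-1 : ℝ) 1) :
    fabiusComb f (n + 1) x =
      fabiusComb f (n + 1) 0 + ∫ t in 0..x, evalCoeffs (P.map (· / 2 ^ n)) t := by
  rw [fabiusComb_succ hcont hint n hx,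
    integral_congr (hP.mono (uIcc_subset_Icc ⟨by norm_num, by norm_num⟩ hx))]
  simp only [evalCoeffs_map_div, integral_div]
  push_cast
  rfl

theorem fabius_one_div_two_pow (hcont : ContinuousOn f (Ici 0))
    (hint : ∀ x : ℝ, 0 ≤ x → f x = ∫ t in (0:ℝ)..(2 * x), f t) {N : ℕ} (hN : Odd N) (hN1 : 1 < N)
    {p : List ℚ}
    (hp : ∀ x ∈ Icc (-1 : ℝ) 1, fabiusComb f N x = fabiusComb f N 0 + ∫ t in 0..x, evalCoeffs p t) :
    f (1 / 2 ^ N) = (((antiderivCoeffs 0 (antiderivCoeffs 0 p)).sum : ℚ) : ℝ) / (2 ^ N - 2) := by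
  set a := f (1 / 2 ^ N)
  have hcomb0 : fabiusComb f N 0 = 2 * a := by
    simp only [fabiusComb, hN.neg_one_pow, add_zero, sub_zero]; ring
  have hintegral : ∫ t in 0..1, fabiusComb f N t =
      2 * a + (((antiderivCoeffs 0 (antiderivCoeffs 0 p)).sum : ℚ) : ℝ) := by
    have hq : EqOn (fabiusComb f N) (fun x => 2 * a + evalCoeffs (antiderivCoeffs 0 p) x) (uIcc 0 1) :=
      fun x hx => by
        rw [hp x (uIcc_subset_Icc ⟨by norm_num, by norm_num⟩ ⟨by norm_num, le_rfl⟩ hx), hcomb0]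
        simp [evalCoeffs_antiderivCoeffs]
    rw [integral_congr hq, integral_add intervalIntegrable_const
      ((continuous_evalCoeffs _).intervalIntegrable 0 1), ← evalCoeffs_one,
      evalCoeffs_antiderivCoeffs]
    simp
  have hnext := fabiusComb_succ hcont hint N (x := 1) ⟨by norm_num, le_rfl⟩
  rw [hintegral] at hnext
  have hhalf : ((1 : ℝ) + 1) / 2 ^ (N + 1) = 1 / 2 ^ N := by
    rw [pow_succ]; field_simp; norm_num
  simp only [fabiusComb, (hN.add_one).neg_one_pow, hhalf, sub_self, zero_div, fabius_zero hint,
    add_zero, sub_zero, one_mul, mul_zero] at hnext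
  have h2N : (2 : ℝ) < 2 ^ N := by
    simpa using pow_lt_pow_right₀ (by norm_num : (1 : ℝ) < 2) hN1
  rw [eq_div_iff (by linarith)]
  field_simp at hnext
  linarith

theorem fabiusComb_eq_evalCoeffs (hcont : ContinuousOn f (Ici 0))
    (hsym : ∀ x : ℝ, 0 ≤ x → x ≤ 1 → f x + f (1 - x) = 1)
    (hint : ∀ x : ℝ, 0 ≤ x → f x = ∫ t in (0:ℝ)..(2 * x), f t) (m : ℕ) :
    EqOn (fabiusComb f (m + 1)) (evalCoeffs (fabiusCoeffs m)) (Icc (-1) 1) := by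
  induction m with
  | zero => intro x hx; simp [fabiusCoeffs, evalCoeffs, fabiusComb_one hsym hx]
  | succ m ih =>
    have hstep := fun x (hx : x ∈ Icc (-1 : ℝ) 1) => fabiusComb_succ_of_eqOn hcont hint ih hx
    suffices hcomb0 : fabiusComb f (m + 2) 0 = (if Even m then 0 else
        2 * (antiderivCoeffs 0 (antiderivCoeffs 0 ((fabiusCoeffs m).map (· / 2 ^ (m + 1))))).sum /
          (2 ^ (m + 2) - 2) : ℚ) by
      intro x hx
      rw [hstep x hx, hcomb0, fabiusCoeffs, evalCoeffs_antiderivCoeffs]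
    by_cases hm : Even m
    · simp [hm, fabiusComb, (hm.add even_two).neg_one_pow]
    · have hodd : Odd (m + 2) := (Nat.not_even_iff_odd.mp hm).add_even even_two
      have hval := fabius_one_div_two_pow hcont hint hodd (by omega) hstep
      rw [if_neg hm, Rat.cast_div, Rat.cast_mul, Rat.cast_sub, Rat.cast_pow, Rat.cast_ofNat,
        mul_div_assoc, ← hval]
      simp only [fabiusComb, hodd.neg_one_pow, add_zero, sub_zero]
      ring

end Fabius

theorem fabius_stmt_8 (f : ℝ → ℝ)
    (hcont : ContinuousOn f (Set.Ici 0))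
    (hsym : ∀ x : ℝ, 0 ≤ x → x ≤ 1 → f x + f (1 - x) = 1)
    (hint : ∀ x : ℝ, 0 ≤ x → f x = ∫ t in (0:ℝ)..(2 * x), f t) :
    ∀ x : ℝ, 0 ≤ x → x ≤ 1 →
      2 ^ 41 * (f ((1 + x) / 512) + f ((1 - x) / 512)) = 132809 / 40989847500 + (583 / 2679075) * x ^ 2 + (19 / 12150) * x ^ 4 + (1 / 405) * x ^ 6 + (1 / 1260) * x ^ 8 := by
  intro x hx0 hx1
  have h := fabiusComb_eq_evalCoeffs hcont hsym hint 8 ⟨by linarith, hx1⟩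
  rw [fabiusCoeffs_eight] at h
  norm_num [fabiusComb, evalCoeffs] at h
  rw [h]
  ring
end

section
/- Let n be a positive integer and let p(x) = Σ_{k=0}^{m} a_k x^{2k+1} be an odd polynomial with real coefficients such that 2^{2n²}·(f((1+x)/2^{2n}) − f((1−x)/2^{2n})) = p(x) for all 0 ≤ x ≤ 1. Then for all 0 ≤ x ≤ 1, 2^{2n²+2n+1}·(f((1+x)/2^{2n+1}) + f((1−x)/2^{2n+1})) = 2^{2n²+2n+2}·f(1/2^{2n+1}) + Σ_{k=0}^{m} (a_k/(k+1))·x^{2k+2}. -/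
/-!
Integrate the hypothesis over `[0, x]`. The functional equation `f y = ∫₀^{2y} f` says that
`y ↦ f (y / 2)` is an antiderivative of `f` on `[0, ∞)`, so after the substitutions
`s = (1 ± t) / 2^{2n}` the left side becomes `2^{2n²+2n}` times
`f ((1+x)/2^{2n+1}) + f ((1-x)/2^{2n+1}) - 2 f (1/2^{2n+1})`, while the odd polynomial
integrates termwise to `½ ∑ a_k / (k+1) x^{2k+2}`.
-/

open intervalIntegral

theorem integral_sum_mul_pow_odd (s : Finset ℕ) (a : ℕ → ℝ) (x : ℝ) :
    ∫ t in (0 : ℝ)..x, ∑ k ∈ s, a k * t ^ (2 * k + 1) =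
      (∑ k ∈ s, a k / ((k : ℝ) + 1) * x ^ (2 * k + 2)) / 2 := by
  rw [integral_finsetSum, Finset.sum_div]
  · refine Finset.sum_congr rfl fun k _ => ?_
    rw [integral_const_mul, integral_pow]
    push_cast
    field_simp
    ring
  · exact fun k _ => (continuous_const.mul (continuous_pow _)).intervalIntegrable _ _

section SelfSimilar

variable {f : ℝ → ℝ} (hcont : ContinuousOn f (Set.Ici 0))
  (hint : ∀ x : ℝ, 0 ≤ x → f x = ∫ t in (0:ℝ)..(2 * x), f t)
include hcont hint

theorem integral_eq_sub_of_eq_integral_double {u v : ℝ} (hu : 0 ≤ u) (hv : 0 ≤ v) :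
    ∫ t in u..v, f t = f (v / 2) - f (u / 2) := by
  have hI : ∀ {w : ℝ}, 0 ≤ w → IntervalIntegrable f MeasureTheory.volume 0 w := fun hw =>
    (hcont.mono fun t ht => le_trans (le_min le_rfl hw) ht.1).intervalIntegrable
  rw [← integral_interval_sub_left (hI hv) (hI hu), hint _ (by positivity),
    hint _ (by positivity), mul_div_cancel₀ _ two_ne_zero, mul_div_cancel₀ _ two_ne_zero]

theorem integral_comp_one_add_div {c x : ℝ} (hc : 0 < c) (hx : 0 ≤ x) :
    ∫ t in (0:ℝ)..x, f ((1 + t) / c) = c * (f ((1 + x) / (2 * c)) - f (1 / (2 * c))) := by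
  simp_rw [add_div (1 : ℝ)]
  rw [integral_comp_add_div _ hc.ne', smul_eq_mul, zero_div, add_zero,
    integral_eq_sub_of_eq_integral_double hcont hint (by positivity) (by positivity),
    ← add_div, div_div, div_div, mul_comm c 2, add_div 1 x]

theorem integral_comp_one_sub_div {c x : ℝ} (hc : 0 < c) (hx : x ≤ 1) :
    ∫ t in (0:ℝ)..x, f ((1 - t) / c) = c * (f (1 / (2 * c)) - f ((1 - x) / (2 * c))) := by
  have : 0 ≤ 1 - x := by linarith
  simp_rw [sub_div (1 : ℝ)]
  rw [integral_comp_sub_div _ hc.ne', smul_eq_mul, zero_div, sub_zero,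
    integral_eq_sub_of_eq_integral_double hcont hint (by rw [← sub_div]; positivity) (by positivity),
    ← sub_div, div_div, div_div, mul_comm c 2, sub_div 1 x]

theorem integral_comp_one_add_div_sub_comp_one_sub_div {c x : ℝ} (hc : 0 < c) (hx₀ : 0 ≤ x)
    (hx₁ : x ≤ 1) :
    ∫ t in (0:ℝ)..x, (f ((1 + t) / c) - f ((1 - t) / c)) =
      c * (f ((1 + x) / (2 * c)) + f ((1 - x) / (2 * c)) - 2 * f (1 / (2 * c))) := by
  have hmaps : ∀ {g : ℝ → ℝ}, Continuous g → (∀ t ∈ Set.uIcc 0 x, 0 ≤ g t) →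
      IntervalIntegrable (fun t => f (g t)) MeasureTheory.volume 0 x := fun hg hpos =>
    (hcont.comp hg.continuousOn hpos).intervalIntegrable
  rw [integral_sub, integral_comp_one_add_div hcont hint hc hx₀,
    integral_comp_one_sub_div hcont hint hc hx₁]
  · ring
  · exact hmaps (by fun_prop) fun t ht => by
      have : 0 ≤ t := by simpa [hx₀] using ht.1
      positivity
  · exact hmaps (by fun_prop) fun t ht => by
      have : t ≤ 1 := le_trans (by simpa [hx₀] using ht.2) hx₁
      have : 0 ≤ 1 - t := by linarith
      positivity

end SelfSimilar

theorem fabius_stmt_10_general (f : ℝ → ℝ)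
    (hcont : ContinuousOn f (Set.Ici 0))
    (hint : ∀ x : ℝ, 0 ≤ x → f x = ∫ t in (0:ℝ)..(2 * x), f t)
    (n m : ℕ) (a : ℕ → ℝ)
    (hp : ∀ x : ℝ, 0 ≤ x → x ≤ 1 →
      (2 : ℝ) ^ (2 * n ^ 2) * (f ((1 + x) / 2 ^ (2 * n)) - f ((1 - x) / 2 ^ (2 * n))) =
        ∑ k ∈ Finset.range (m + 1), a k * x ^ (2 * k + 1)) :
    ∀ x : ℝ, 0 ≤ x → x ≤ 1 →
      (2 : ℝ) ^ (2 * n ^ 2 + 2 * n + 1) * (f ((1 + x) / 2 ^ (2 * n + 1)) + f ((1 - x) / 2 ^ (2 * n + 1))) =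
        (2 : ℝ) ^ (2 * n ^ 2 + 2 * n + 2) * f (1 / 2 ^ (2 * n + 1)) +
          ∑ k ∈ Finset.range (m + 1), (a k / ((k : ℝ) + 1)) * x ^ (2 * k + 2) := by
  intro x hx₀ hx₁
  have hp_integrated := integral_congr (μ := MeasureTheory.volume) (a := 0) (b := x) fun t ht =>
    hp t (by simpa [hx₀] using ht.1) (le_trans (by simpa [hx₀] using ht.2) hx₁)
  rw [integral_const_mul, integral_sum_mul_pow_odd,
    integral_comp_one_add_div_sub_comp_one_sub_div hcont hint (by positivity) hx₀ hx₁]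
    at hp_integrated
  rw [pow_succ' _ (2 * n), pow_succ _ (2 * n ^ 2 + 2 * n), pow_succ _ (2 * n ^ 2 + 2 * n + 1),
    pow_add]
  linear_combination 2 * hp_integrated

theorem fabius_stmt_10 (f : ℝ → ℝ)
    (hcont : ContinuousOn f (Set.Ici 0))
    (hsym : ∀ x : ℝ, 0 ≤ x → x ≤ 1 → f x + f (1 - x) = 1)
    (hint : ∀ x : ℝ, 0 ≤ x → f x = ∫ t in (0:ℝ)..(2 * x), f t)
    (n m : ℕ) (hn : 0 < n) (a : ℕ → ℝ)
    (hp : ∀ x : ℝ, 0 ≤ x → x ≤ 1 →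
      (2 : ℝ) ^ (2 * n ^ 2) * (f ((1 + x) / 2 ^ (2 * n)) - f ((1 - x) / 2 ^ (2 * n))) =
        ∑ k ∈ Finset.range (m + 1), a k * x ^ (2 * k + 1)) :
    ∀ x : ℝ, 0 ≤ x → x ≤ 1 →
      (2 : ℝ) ^ (2 * n ^ 2 + 2 * n + 1) * (f ((1 + x) / 2 ^ (2 * n + 1)) + f ((1 - x) / 2 ^ (2 * n + 1))) =
        (2 : ℝ) ^ (2 * n ^ 2 + 2 * n + 2) * f (1 / 2 ^ (2 * n + 1)) +
          ∑ k ∈ Finset.range (m + 1), (a k / ((k : ℝ) + 1)) * x ^ (2 * k + 2) :=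
  fabius_stmt_10_general f hcont hint n m a hp
end

section
/- Let n be a positive integer and let p(x) = Σ_{k=0}^{m} a_k x^{2k+1} be an odd polynomial with real coefficients such that 2^{2n²}·(f((1+x)/2^{2n}) − f((1−x)/2^{2n})) = p(x) for all 0 ≤ x ≤ 1. Then for all 0 ≤ x ≤ 1, 2^{2n²+4n+2}·(f((1+x)/2^{2n+2}) − f((1−x)/2^{2n+2})) = 2^{2n²+2n+2}·f(1/2^{2n+1})·x + Σ_{k=0}^{m} (a_k/((k+1)(2k+3)))·x^{2k+3}. -/
/-!
Since `f (y / 2) = ∫ t in 0..y, f t`, the values `f ((1 ± x) / (2E))` differ from `f (1 / (2E))`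
by `± E⁻¹ ∫ s in 0..x, f ((1 ± s) / E)`. So halving the scale turns the odd part of `f` around the
dyadic point into the integral of its even part, and the even part into a constant plus the
integral of the odd part; integrating the given odd polynomial twice yields the claim.
-/

open intervalIntegral MeasureTheory Set

namespace Fabius

/-- `oddPart f E` and `evenPart f E` are (twice) the odd and even parts of `f` around `1 / E`,
rescaled so that the variable runs over `[-1, 1]`. -/
noncomputable def oddPart (f : ℝ → ℝ) (E x : ℝ) : ℝ := f ((1 + x) / E) - f ((1 - x) / E)

noncomputable def evenPart (f : ℝ → ℝ) (E x : ℝ) : ℝ := f ((1 + x) / E) + f ((1 - x) / E)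

theorem integral_sum_mul_pow (S : Finset ℕ) (c : ℕ → ℝ) (e : ℕ → ℕ) (x : ℝ) :
    ∫ s in (0 : ℝ)..x, ∑ k ∈ S, c k * s ^ e k = ∑ k ∈ S, c k / (e k + 1) * x ^ (e k + 1) := by
  rw [intervalIntegral.integral_finsetSum fun k _ =>
    (by fun_prop : Continuous _).intervalIntegrable _ _]
  refine Finset.sum_congr rfl fun k _ => ?_
  rw [intervalIntegral.integral_const_mul, integral_pow]
  simp [div_eq_mul_inv, mul_comm, mul_left_comm]

theorem integral_comp_one_add_div (f : ℝ → ℝ) {E : ℝ} (hE : E ≠ 0) (x : ℝ) :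
    ∫ s in (0 : ℝ)..x, f ((1 + s) / E) = E * ∫ t in 1 / E..(1 + x) / E, f t := by
  have h : ∀ s : ℝ, (1 + s) / E = E⁻¹ * s + E⁻¹ := fun s => by field_simp; ring
  simp only [h, integral_comp_mul_add f (inv_ne_zero hE), smul_eq_mul, inv_inv, mul_zero,
    zero_add, one_div]

theorem integral_comp_one_sub_div (f : ℝ → ℝ) {E : ℝ} (hE : E ≠ 0) (x : ℝ) :
    ∫ s in (0 : ℝ)..x, f ((1 - s) / E) = E * ∫ t in (1 - x) / E..1 / E, f t := by
  have h : ∀ s : ℝ, (1 - s) / E = E⁻¹ - E⁻¹ * s := fun s => by field_simp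
  simp only [h, integral_comp_sub_mul f (inv_ne_zero hE), smul_eq_mul, inv_inv, mul_zero,
    sub_zero, one_div]

section

variable {f : ℝ → ℝ} (hcont : ContinuousOn f (Ici 0))
include hcont

theorem intervalIntegrable_of_continuousOn_Ici {a b : ℝ} (ha : 0 ≤ a) (hb : 0 ≤ b) :
    IntervalIntegrable f volume a b :=
  (hcont.mono fun _ ht => (le_inf ha hb).trans ht.1).intervalIntegrable

theorem intervalIntegrable_comp_one_add_div {E x : ℝ} (hE : 0 < E) (hx : 0 ≤ x) :
    IntervalIntegrable (fun s => f ((1 + s) / E)) volume 0 x := by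
  refine ContinuousOn.intervalIntegrable (hcont.comp (by fun_prop) fun s hs => ?_)
  rw [uIcc_of_le hx] at hs
  exact div_nonneg (by linarith [hs.1]) hE.le

theorem intervalIntegrable_comp_one_sub_div {E x : ℝ} (hE : 0 < E) (hx : 0 ≤ x) (hx1 : x ≤ 1) :
    IntervalIntegrable (fun s => f ((1 - s) / E)) volume 0 x := by
  refine ContinuousOn.intervalIntegrable (hcont.comp (by fun_prop) fun s hs => ?_)
  rw [uIcc_of_le hx] at hs
  exact div_nonneg (by linarith [hs.2]) hE.le

variable (hint : ∀ x : ℝ, 0 ≤ x → f x = ∫ t in (0 : ℝ)..(2 * x), f t)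
include hint

theorem sub_eq_integral {u v : ℝ} (hu : 0 ≤ u) (hv : 0 ≤ v) :
    f (u / 2) - f (v / 2) = ∫ t in v..u, f t := by
  rw [hint _ (by positivity), hint _ (by positivity), mul_div_cancel₀ _ two_ne_zero,
    mul_div_cancel₀ _ two_ne_zero]
  exact integral_interval_sub_left (intervalIntegrable_of_continuousOn_Ici hcont le_rfl hu)
    (intervalIntegrable_of_continuousOn_Ici hcont le_rfl hv)

theorem apply_one_add_div_mul_two {E x : ℝ} (hE : 0 < E) (hx : 0 ≤ x) :
    f ((1 + x) / (E * 2)) = f (1 / (E * 2)) + E⁻¹ * ∫ s in (0 : ℝ)..x, f ((1 + s) / E) := by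
  rw [integral_comp_one_add_div f hE.ne', inv_mul_cancel_left₀ hE.ne', ← div_div, ← div_div,
    ← sub_eq_integral hcont hint (by positivity) (by positivity)]
  ring

theorem apply_one_sub_div_mul_two {E x : ℝ} (hE : 0 < E) (hx1 : x ≤ 1) :
    f ((1 - x) / (E * 2)) = f (1 / (E * 2)) - E⁻¹ * ∫ s in (0 : ℝ)..x, f ((1 - s) / E) := by
  have : 0 ≤ (1 - x) / E := div_nonneg (by linarith) hE.le
  rw [integral_comp_one_sub_div f hE.ne', inv_mul_cancel_left₀ hE.ne', ← div_div, ← div_div,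
    ← sub_eq_integral hcont hint (by positivity) this]
  ring

theorem evenPart_mul_two {E x : ℝ} (hE : 0 < E) (hx : 0 ≤ x) (hx1 : x ≤ 1) :
    evenPart f (E * 2) x = 2 * f (1 / (E * 2)) + E⁻¹ * ∫ s in (0 : ℝ)..x, oddPart f E s := by
  simp only [evenPart, oddPart]
  rw [integral_sub (intervalIntegrable_comp_one_add_div hcont hE hx)
    (intervalIntegrable_comp_one_sub_div hcont hE hx hx1),
    apply_one_add_div_mul_two hcont hint hE hx, apply_one_sub_div_mul_two hcont hint hE hx1]
  ring

theorem oddPart_mul_two {E x : ℝ} (hE : 0 < E) (hx : 0 ≤ x) (hx1 : x ≤ 1) :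
    oddPart f (E * 2) x = E⁻¹ * ∫ s in (0 : ℝ)..x, evenPart f E s := by
  simp only [evenPart, oddPart]
  rw [integral_add (intervalIntegrable_comp_one_add_div hcont hE hx)
    (intervalIntegrable_comp_one_sub_div hcont hE hx hx1),
    apply_one_add_div_mul_two hcont hint hE hx, apply_one_sub_div_mul_two hcont hint hE hx1]
  ring

theorem evenPart_mul_two_eq_sum {E : ℝ} (hE : 0 < E) {S : Finset ℕ} {b : ℕ → ℝ} {e : ℕ → ℕ}
    (hodd : ∀ s, 0 ≤ s → s ≤ 1 → oddPart f E s = ∑ k ∈ S, b k * s ^ e k)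
    (x : ℝ) (hx : 0 ≤ x) (hx1 : x ≤ 1) :
    evenPart f (E * 2) x =
      2 * f (1 / (E * 2)) + ∑ k ∈ S, b k / (E * (e k + 1)) * x ^ (e k + 1) := by
  rw [evenPart_mul_two hcont hint hE hx hx1, integral_congr fun t ht =>
      hodd t (uIcc_of_le hx ▸ ht).1 ((uIcc_of_le hx ▸ ht).2.trans hx1),
    integral_sum_mul_pow, Finset.mul_sum]
  congr 1
  refine Finset.sum_congr rfl fun k _ => ?_
  field_simp

theorem oddPart_mul_two_eq_sum {E : ℝ} (hE : 0 < E) {C : ℝ} {S : Finset ℕ} {b : ℕ → ℝ}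
    {e : ℕ → ℕ} (heven : ∀ s, 0 ≤ s → s ≤ 1 → evenPart f E s = C + ∑ k ∈ S, b k * s ^ e k)
    (x : ℝ) (hx : 0 ≤ x) (hx1 : x ≤ 1) :
    oddPart f (E * 2) x = C / E * x + ∑ k ∈ S, b k / (E * (e k + 1)) * x ^ (e k + 1) := by
  rw [oddPart_mul_two hcont hint hE hx hx1, integral_congr fun t ht =>
      heven t (uIcc_of_le hx ▸ ht).1 ((uIcc_of_le hx ▸ ht).2.trans hx1),
    integral_add intervalIntegrable_const ((by fun_prop : Continuous _).intervalIntegrable _ _),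
    intervalIntegral.integral_const, integral_sum_mul_pow, sub_zero, smul_eq_mul, mul_add,
    Finset.mul_sum]
  congr 1
  · ring
  refine Finset.sum_congr rfl fun k _ => ?_
  field_simp

end

end Fabius

open Fabius in
theorem fabius_stmt_11_general (f : ℝ → ℝ)
    (hcont : ContinuousOn f (Set.Ici 0))
    (hint : ∀ x : ℝ, 0 ≤ x → f x = ∫ t in (0:ℝ)..(2 * x), f t)
    (n m : ℕ) (a : ℕ → ℝ)
    (hp : ∀ x : ℝ, 0 ≤ x → x ≤ 1 →
      (2 : ℝ) ^ (2 * n ^ 2) * (f ((1 + x) / 2 ^ (2 * n)) - f ((1 - x) / 2 ^ (2 * n))) =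
        ∑ k ∈ Finset.range (m + 1), a k * x ^ (2 * k + 1)) :
    ∀ x : ℝ, 0 ≤ x → x ≤ 1 →
      (2 : ℝ) ^ (2 * n ^ 2 + 4 * n + 2) * (f ((1 + x) / 2 ^ (2 * n + 2)) - f ((1 - x) / 2 ^ (2 * n + 2))) =
        (2 : ℝ) ^ (2 * n ^ 2 + 2 * n + 2) * f (1 / 2 ^ (2 * n + 1)) * x +
          ∑ k ∈ Finset.range (m + 1), (a k / (((k : ℝ) + 1) * (2 * (k : ℝ) + 3))) * x ^ (2 * k + 3) := by
  intro x hx0 hx1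
  set E : ℝ := 2 ^ (2 * n) with hE_def
  set c : ℝ := 2 ^ (2 * n ^ 2) with hc_def
  have hE : 0 < E := by positivity
  have hc : c ≠ 0 := by positivity
  have hodd : ∀ s, 0 ≤ s → s ≤ 1 →
      oddPart f E s = ∑ k ∈ Finset.range (m + 1), a k / c * s ^ (2 * k + 1) := fun s hs0 hs1 => by
    simp only [div_mul_eq_mul_div, ← Finset.sum_div, ← hp s hs0 hs1]
    rw [oddPart, mul_div_cancel_left₀ _ hc]
  have hx := oddPart_mul_two_eq_sum hcont hint (mul_pos hE two_pos)
    (evenPart_mul_two_eq_sum hcont hint hE hodd) x hx0 hx1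
  have h1 : (2 : ℝ) ^ (2 * n + 1) = E * 2 := pow_succ _ _
  have h2 : (2 : ℝ) ^ (2 * n + 2) = E * 2 * 2 := by rw [hE_def]; ring
  have h3 : (2 : ℝ) ^ (2 * n ^ 2 + 4 * n + 2) = c * E * E * 4 := by rw [hE_def, hc_def]; ring
  have h4 : (2 : ℝ) ^ (2 * n ^ 2 + 2 * n + 2) = c * E * 4 := by rw [hE_def, hc_def]; ring
  rw [h1, h2, h3, h4]
  change _ * oddPart f (E * 2 * 2) x = _
  rw [hx, mul_add, Finset.mul_sum]
  congr 1
  · field_simp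
  refine Finset.sum_congr rfl fun k _ => ?_
  push_cast
  field_simp
  ring

theorem fabius_stmt_11 (f : ℝ → ℝ)
    (hcont : ContinuousOn f (Set.Ici 0))
    (hsym : ∀ x : ℝ, 0 ≤ x → x ≤ 1 → f x + f (1 - x) = 1)
    (hint : ∀ x : ℝ, 0 ≤ x → f x = ∫ t in (0:ℝ)..(2 * x), f t)
    (n m : ℕ) (hn : 0 < n) (a : ℕ → ℝ)
    (hp : ∀ x : ℝ, 0 ≤ x → x ≤ 1 →
      (2 : ℝ) ^ (2 * n ^ 2) * (f ((1 + x) / 2 ^ (2 * n)) - f ((1 - x) / 2 ^ (2 * n))) =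
        ∑ k ∈ Finset.range (m + 1), a k * x ^ (2 * k + 1)) :
    ∀ x : ℝ, 0 ≤ x → x ≤ 1 →
      (2 : ℝ) ^ (2 * n ^ 2 + 4 * n + 2) * (f ((1 + x) / 2 ^ (2 * n + 2)) - f ((1 - x) / 2 ^ (2 * n + 2))) =
        (2 : ℝ) ^ (2 * n ^ 2 + 2 * n + 2) * f (1 / 2 ^ (2 * n + 1)) * x +
          ∑ k ∈ Finset.range (m + 1), (a k / (((k : ℝ) + 1) * (2 * (k : ℝ) + 3))) * x ^ (2 * k + 3) :=
  fabius_stmt_11_general f hcont hint n m a hp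
end

section
/- Let n be a positive integer and let p(x) = Σ_{k=0}^{m} a_k x^{2k+1} be an odd polynomial with real coefficients such that 2^{2n²}·(f((1+x)/2^{2n}) − f((1−x)/2^{2n})) = p(x) for all 0 ≤ x ≤ 1. Then f(1/2^{2n+1}) = (1/(2^{2n²+2n+2}·(2^{2n}−1)))·Σ_{k=0}^{m} a_k/((k+1)(2k+3)). -/
open scoped BigOperators
open intervalIntegral Set

/-!
Since `∫₀ᵘ f = f (u / 2)` for `u ≥ 0`, the hypothesis can be integrated twice in closed form.
With `c = 2⁻²ⁿ`, integrating `f (c + c x) - f (c - c x)` over `[0, y]` gives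
`c⁻¹ (f (c (1 + y) / 2) + f (c (1 - y) / 2) - 2 f (c / 2))`, and integrating this over `[0, 1]`
gives `2 c⁻¹ (c⁻¹ - 1) f (c / 2)`, using `f 0 = 0`. The same two integrations turn the odd
polynomial into `½ ∑ aₖ / ((k + 1) (2k + 3))`.
-/

theorem integral_sum_mul_pow {ι : Type*} (s : Finset ι) (b : ι → ℝ) (e : ι → ℕ) (y : ℝ) :
    ∫ x in (0 : ℝ)..y, ∑ i ∈ s, b i * x ^ e i = ∑ i ∈ s, b i / (e i + 1) * y ^ (e i + 1) := by
  rw [intervalIntegral.integral_finsetSum fun i _ =>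
    ((continuous_pow (e i)).intervalIntegrable 0 y).const_mul (b i)]
  refine Finset.sum_congr rfl fun i _ => ?_
  rw [integral_const_mul, integral_pow, zero_pow (Nat.succ_ne_zero _), sub_zero]
  ring

theorem integral_integral_sum_mul_pow_odd (s : Finset ℕ) (b : ℕ → ℝ) :
    ∫ y in (0 : ℝ)..1, ∫ x in (0 : ℝ)..y, ∑ k ∈ s, b k * x ^ (2 * k + 1) =
      2⁻¹ * ∑ k ∈ s, b k / (((k : ℝ) + 1) * (2 * (k : ℝ) + 3)) := by
  simp only [integral_sum_mul_pow, one_pow, mul_one, Finset.mul_sum]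
  refine Finset.sum_congr rfl fun k _ => ?_
  push_cast
  field_simp
  ring

section SelfSimilar

variable {g : ℝ → ℝ}

theorem intervalIntegrable_comp_mul_add (hg : ContinuousOn g (Ici 0)) {c d y : ℝ} (hy : 0 ≤ y)
    (hd : 0 ≤ d) (hcyd : 0 ≤ c * y + d) :
    IntervalIntegrable (fun x => g (c * x + d)) MeasureTheory.volume 0 y := by
  refine ContinuousOn.intervalIntegrable ?_
  rw [uIcc_of_le hy]
  refine hg.comp (by fun_prop) fun x hx => ?_
  rcases hy.eq_or_lt with rfl | hy
  · simp [le_antisymm hx.2 hx.1, hd]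
  · have : 0 ≤ y * (c * x + d) := by
      nlinarith [mul_nonneg (sub_nonneg.2 hx.2) hd, mul_nonneg hx.1 hcyd]
    exact nonneg_of_mul_nonneg_right this hy

variable (hg : ContinuousOn g (Ici 0)) (hself : ∀ x, 0 ≤ x → g x = ∫ t in (0 : ℝ)..2 * x, g t)
include hg hself

theorem integral_eq_sub_half {a b : ℝ} (ha : 0 ≤ a) (hb : 0 ≤ b) :
    ∫ t in a..b, g t = g (b / 2) - g (a / 2) := by
  have primitive : ∀ u, 0 ≤ u → ∫ t in (0 : ℝ)..u, g t = g (u / 2) := fun u hu => by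
    rw [hself (u / 2) (by linarith), mul_div_cancel₀ u two_ne_zero]
  have integrable : ∀ u, 0 ≤ u → IntervalIntegrable g MeasureTheory.volume 0 u := fun u hu => by
    simpa using intervalIntegrable_comp_mul_add hg hu le_rfl (by simpa using hu) (c := 1)
  rw [← integral_interval_sub_left (integrable b hb) (integrable a ha), primitive b hb,
    primitive a ha]

theorem integral_comp_mul_add_eq {c d y : ℝ} (hc : c ≠ 0) (hd : 0 ≤ d) (hcyd : 0 ≤ c * y + d) :
    ∫ x in (0 : ℝ)..y, g (c * x + d) = c⁻¹ * (g ((c * y + d) / 2) - g (d / 2)) := by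
  rw [integral_comp_mul_add g hc, mul_zero, zero_add, integral_eq_sub_half hg hself hd hcyd,
    smul_eq_mul]

theorem integral_sub_reflect_eq {c y : ℝ} (hc : 0 < c) (hy₀ : 0 ≤ y) (hy₁ : y ≤ 1) :
    ∫ x in (0 : ℝ)..y, (g (c * x + c) - g (-c * x + c)) =
      c⁻¹ * (g (c / 2 * y + c / 2) + g (-(c / 2) * y + c / 2) - 2 * g (c / 2)) := by
  have hright : 0 ≤ c * y + c := by positivity
  have hleft : 0 ≤ -c * y + c := by nlinarith
  rw [integral_sub (intervalIntegrable_comp_mul_add hg hy₀ hc.le hright)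
      (intervalIntegrable_comp_mul_add hg hy₀ hc.le hleft),
    integral_comp_mul_add_eq hg hself hc.ne' hc.le hright,
    integral_comp_mul_add_eq hg hself (neg_ne_zero.2 hc.ne') hc.le hleft, inv_neg]
  ring_nf

theorem integral_reflect_add_eq {c : ℝ} (hc : 0 < c) :
    ∫ y in (0 : ℝ)..1, (g (c / 2 * y + c / 2) + g (-(c / 2) * y + c / 2) - 2 * g (c / 2)) =
      2 * (c⁻¹ - 1) * g (c / 2) := by
  have hc₂ : 0 < c / 2 := by positivity
  have hzero : g 0 = 0 := by simpa using hself 0 le_rfl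
  have hright := intervalIntegrable_comp_mul_add hg zero_le_one hc₂.le (c := c / 2) (by positivity)
  have hleft := intervalIntegrable_comp_mul_add hg zero_le_one hc₂.le (c := -(c / 2)) (by simp)
  rw [integral_sub (hright.add hleft) intervalIntegrable_const, integral_add hright hleft,
    integral_comp_mul_add_eq hg hself hc₂.ne' hc₂.le (by positivity),
    integral_comp_mul_add_eq hg hself (neg_ne_zero.2 hc₂.ne') hc₂.le (by simp),
    intervalIntegral.integral_const, smul_eq_mul, show -(c / 2) * 1 + c / 2 = 0 by ring,
    zero_div, hzero, show (c / 2 * 1 + c / 2) / 2 = c / 2 by ring]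
  field_simp
  ring

theorem mul_apply_half_eq_integral_integral {c : ℝ} (hc : 0 < c) {P : ℝ → ℝ}
    (hP : ∀ x ∈ Icc (0 : ℝ) 1, g (c * x + c) - g (-c * x + c) = P x) :
    2 * c⁻¹ * (c⁻¹ - 1) * g (c / 2) = ∫ y in (0 : ℝ)..1, ∫ x in (0 : ℝ)..y, P x := by
  have inner : EqOn (fun y => ∫ x in (0 : ℝ)..y, P x)
      (fun y => c⁻¹ * (g (c / 2 * y + c / 2) + g (-(c / 2) * y + c / 2) - 2 * g (c / 2)))
      (uIcc 0 1) := by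
    intro y hy
    rw [uIcc_of_le zero_le_one] at hy
    dsimp only
    rw [← integral_sub_reflect_eq hg hself hc hy.1 hy.2]
    refine integral_congr fun x hx => ?_
    rw [uIcc_of_le hy.1] at hx
    exact (hP x ⟨hx.1, hx.2.trans hy.2⟩).symm
  rw [integral_congr inner, intervalIntegral.integral_const_mul,
    integral_reflect_add_eq hg hself hc]
  ring

end SelfSimilar

theorem fabius_stmt_12_general (f : ℝ → ℝ)
    (hcont : ContinuousOn f (Set.Ici 0))
    (hint : ∀ x : ℝ, 0 ≤ x → f x = ∫ t in (0:ℝ)..(2 * x), f t)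
    (n m : ℕ) (hn : 0 < n) (a : ℕ → ℝ)
    (hp : ∀ x : ℝ, 0 ≤ x → x ≤ 1 →
      (2 : ℝ) ^ (2 * n ^ 2) * (f ((1 + x) / 2 ^ (2 * n)) - f ((1 - x) / 2 ^ (2 * n))) =
        ∑ k ∈ Finset.range (m + 1), a k * x ^ (2 * k + 1)) :
    f (1 / 2 ^ (2 * n + 1)) =
      (1 / ((2 : ℝ) ^ (2 * n ^ 2 + 2 * n + 2) * ((2 : ℝ) ^ (2 * n) - 1))) *
        ∑ k ∈ Finset.range (m + 1), a k / (((k : ℝ) + 1) * (2 * (k : ℝ) + 3)) := by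
  set D : ℝ := 2 ^ (2 * n) with hD
  set A : ℝ := 2 ^ (2 * n ^ 2)
  have hD₁ : 1 < D := one_lt_pow₀ one_lt_two (by omega)
  have hA₀ : A ≠ 0 := by positivity
  have key := mul_apply_half_eq_integral_integral hcont hint (inv_pos.2 (by positivity : 0 < D))
    (P := fun x => A⁻¹ * ∑ k ∈ Finset.range (m + 1), a k * x ^ (2 * k + 1)) fun x hx => by
      rw [← hp x hx.1 hx.2, inv_mul_cancel_left₀ hA₀]
      ring_nf
  simp only [intervalIntegral.integral_const_mul, integral_integral_sum_mul_pow_odd] at key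
  have harg : (1 : ℝ) / 2 ^ (2 * n + 1) = D⁻¹ / 2 := by
    rw [pow_succ, ← hD, one_div, mul_inv, div_eq_mul_inv]
  have hpow : (2 : ℝ) ^ (2 * n ^ 2 + 2 * n + 2) = 4 * A * D := by
    rw [pow_add, pow_add]
    norm_num
    ring
  have hD₀ : D - 1 ≠ 0 := sub_ne_zero.2 hD₁.ne'
  rw [inv_inv] at key
  rw [harg, hpow]
  field_simp at key ⊢
  linear_combination key

theorem fabius_stmt_12 (f : ℝ → ℝ)
    (hcont : ContinuousOn f (Set.Ici 0))
    (hsym : ∀ x : ℝ, 0 ≤ x → x ≤ 1 → f x + f (1 - x) = 1)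
    (hint : ∀ x : ℝ, 0 ≤ x → f x = ∫ t in (0:ℝ)..(2 * x), f t)
    (n m : ℕ) (hn : 0 < n) (a : ℕ → ℝ)
    (hp : ∀ x : ℝ, 0 ≤ x → x ≤ 1 →
      (2 : ℝ) ^ (2 * n ^ 2) * (f ((1 + x) / 2 ^ (2 * n)) - f ((1 - x) / 2 ^ (2 * n))) =
        ∑ k ∈ Finset.range (m + 1), a k * x ^ (2 * k + 1)) :
    f (1 / 2 ^ (2 * n + 1)) =
      (1 / ((2 : ℝ) ^ (2 * n ^ 2 + 2 * n + 2) * ((2 : ℝ) ^ (2 * n) - 1))) *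
        ∑ k ∈ Finset.range (m + 1), a k / (((k : ℝ) + 1) * (2 * (k : ℝ) + 3)) :=
  fabius_stmt_12_general f hcont hint n m hn a hp
end

section
/- One has f(1/4) = 5/72 and f(3/4) = 67/72. -/
/-!
Write `m k = ∫₀¹ uᵏ f u` and `n k = ∫₀^{1/2} uᵏ f u`. Reflecting `u ↦ 1 - u` with
`f u + f (1 - u) = 1` gives `m 0 = 1/2`, `m 2 = m 1 - 1/12`, and, after splitting `m 1` at `1/2`,
`m 1 = 2 n 1 + 3/8 - n 0`. Self-similarity `f u = F (2u)`, `F` the primitive of `f`, together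
with an integration by parts against a weight vanishing at `1`, expresses `n 0` and `n 1`
through `m 0, m 1, m 2`. The resulting linear system gives `f (1/4) = F (1/2) = n 0 = 5/72`.
-/

open intervalIntegral MeasureTheory Set

variable {g : ℝ → ℝ}

noncomputable def intervalMoment (g : ℝ → ℝ) (a b : ℝ) (k : ℕ) : ℝ :=
  ∫ u in a..b, u ^ k * g u

theorem integral_quadratic_mul_eq {p : ℝ → ℝ} (hg : Continuous g) {c₀ c₁ c₂ : ℝ}
    (hp : ∀ u, p u = c₀ + c₁ * u + c₂ * u ^ 2) (a b : ℝ) :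
    ∫ u in a..b, p u * g u =
      c₀ * intervalMoment g a b 0 + c₁ * intervalMoment g a b 1 + c₂ * intervalMoment g a b 2 := by
  have hi : ∀ (k : ℕ) (c : ℝ), IntervalIntegrable (fun u => c * (u ^ k * g u)) volume a b :=
    fun k c => (continuous_const.mul ((continuous_pow k).mul hg)).intervalIntegrable a b
  calc ∫ u in a..b, p u * g u
      = ∫ u in a..b, c₀ * (u ^ 0 * g u) + c₁ * (u ^ 1 * g u) + c₂ * (u ^ 2 * g u) :=
        integral_congr fun u _ => by simp only [hp]; ring
    _ = _ := by
        rw [integral_add ((hi 0 c₀).add (hi 1 c₁)) (hi 2 c₂), integral_add (hi 0 c₀) (hi 1 c₁)]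
        simp only [intervalIntegral.integral_const_mul, intervalMoment]

theorem integral_mul_of_add_one_sub_eq_one {φ : ℝ → ℝ} (hg : Continuous g) (hφ : Continuous φ)
    (hsym : ∀ x, 0 ≤ x → x ≤ 1 → g x + g (1 - x) = 1) {a b : ℝ} (ha : 0 ≤ a) (hab : a ≤ b)
    (hb : b ≤ 1) :
    ∫ u in (1 - b)..(1 - a), φ u * g u =
      (∫ u in (1 - b)..(1 - a), φ u) - ∫ v in a..b, φ (1 - v) * g v := by
  have hφ' : Continuous fun v => φ (1 - v) := hφ.comp (continuous_const.sub continuous_id)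
  have hφg : IntervalIntegrable (fun v => φ (1 - v) * g v) volume a b :=
    (hφ'.mul hg).intervalIntegrable a b
  rw [← integral_comp_sub_left (fun u => φ u * g u), ← integral_comp_sub_left φ,
    ← integral_sub (hφ'.intervalIntegrable a b) hφg]
  refine integral_congr fun v hv => ?_
  rw [uIcc_of_le hab] at hv
  have := hsym v (ha.trans hv.1) (hv.2.trans hb)
  rw [show g (1 - v) = 1 - g v by linarith]
  ring

theorem integral_half_mul_of_self_similar {ψ Ψ : ℝ → ℝ} (hg : Continuous g)
    (hself : ∀ x, 0 ≤ x → g x = ∫ t in (0:ℝ)..2 * x, g t) (hψ : Continuous ψ)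
    (hΨ : ∀ x, HasDerivAt Ψ (ψ x) x) (hΨ1 : Ψ 1 = 0) :
    ∫ u in (0:ℝ)..1 / 2, ψ (2 * u) * g u = -(1 / 2) * ∫ u in (0:ℝ)..1, Ψ u * g u := by
  set G : ℝ → ℝ := fun x => ∫ t in (0:ℝ)..x, g t
  have hG : ∀ x, HasDerivAt G (g x) x := fun x =>
    (hg.integral_hasStrictDerivAt 0 x).hasDerivAt
  have by_parts := integral_mul_deriv_eq_deriv_mul (a := 0) (b := 1) (fun x _ => hΨ x)
    (fun x _ => hG x) (hψ.intervalIntegrable 0 1) (hg.intervalIntegrable 0 1)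
  rw [hΨ1, show G 0 = 0 from integral_same] at by_parts
  calc ∫ u in (0:ℝ)..1 / 2, ψ (2 * u) * g u
      = ∫ u in (0:ℝ)..1 / 2, (fun w => ψ w * G w) (2 * u) := by
        refine integral_congr fun u hu => ?_
        rw [uIcc_of_le (by norm_num)] at hu
        simp only [G, ← hself u hu.1]
    _ = 1 / 2 * ∫ w in (0:ℝ)..1, ψ w * G w := by
        rw [integral_comp_mul_left (fun w => ψ w * G w) two_ne_zero]; norm_num
    _ = -(1 / 2) * ∫ u in (0:ℝ)..1, Ψ u * g u := by
        rw [by_parts]; ring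

theorem intervalMoment_zero_eq_half (hg : Continuous g)
    (hsym : ∀ x, 0 ≤ x → x ≤ 1 → g x + g (1 - x) = 1) :
    intervalMoment g 0 1 0 = 1 / 2 := by
  have h := integral_mul_of_add_one_sub_eq_one (φ := fun _ => 1) hg continuous_const hsym
    le_rfl zero_le_one le_rfl
  rw [integral_quadratic_mul_eq hg (c₀ := 1) (c₁ := 0) (c₂ := 0) (fun _ => by ring),
    integral_quadratic_mul_eq hg (c₀ := 1) (c₁ := 0) (c₂ := 0) (fun _ => by ring)] at h
  norm_num at h
  linarith

theorem intervalMoment_two_eq (hg : Continuous g)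
    (hsym : ∀ x, 0 ≤ x → x ≤ 1 → g x + g (1 - x) = 1) :
    intervalMoment g 0 1 2 = intervalMoment g 0 1 1 - 1 / 12 := by
  have h := integral_mul_of_add_one_sub_eq_one (φ := fun u => u ^ 2) hg (continuous_pow 2) hsym
    le_rfl zero_le_one le_rfl
  rw [integral_quadratic_mul_eq hg (c₀ := 0) (c₁ := 0) (c₂ := 1) (fun _ => by ring),
    integral_quadratic_mul_eq hg (c₀ := 1) (c₁ := -2) (c₂ := 1) (fun _ => by ring)] at h
  norm_num at h
  linarith [intervalMoment_zero_eq_half hg hsym]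

theorem intervalMoment_one_eq (hg : Continuous g)
    (hsym : ∀ x, 0 ≤ x → x ≤ 1 → g x + g (1 - x) = 1) :
    intervalMoment g 0 1 1 =
      2 * intervalMoment g 0 (1 / 2) 1 + 3 / 8 - intervalMoment g 0 (1 / 2) 0 := by
  have h := integral_mul_of_add_one_sub_eq_one (φ := fun u => u) hg continuous_id hsym
    le_rfl (by norm_num : (0:ℝ) ≤ 1 / 2) (by norm_num)
  rw [integral_quadratic_mul_eq hg (p := fun v => 1 - v) (c₀ := 1) (c₁ := -1) (c₂ := 0)
    (fun _ => by ring)] at h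
  have hi : ∀ a b : ℝ, IntervalIntegrable (fun u => u ^ 1 * g u) volume a b := fun a b =>
    ((continuous_pow 1).mul hg).intervalIntegrable a b
  have hsplit := integral_add_adjacent_intervals (hi 0 (1 / 2)) (hi (1 / 2) 1)
  norm_num [integral_id] at h
  rw [intervalMoment, ← hsplit]
  simp only [intervalMoment, pow_one, pow_zero, one_mul] at h ⊢
  linarith

theorem intervalMoment_half_zero_eq (hg : Continuous g)
    (hself : ∀ x, 0 ≤ x → g x = ∫ t in (0:ℝ)..2 * x, g t) :
    intervalMoment g 0 (1 / 2) 0 = (intervalMoment g 0 1 0 - intervalMoment g 0 1 1) / 2 := by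
  have h := integral_half_mul_of_self_similar (ψ := fun _ => 1) (Ψ := fun u => u - 1) hg hself
    continuous_const (fun x => (hasDerivAt_id x).sub_const 1) (sub_self 1)
  rw [integral_quadratic_mul_eq hg (c₀ := 1) (c₁ := 0) (c₂ := 0) (fun _ => by ring),
    integral_quadratic_mul_eq hg (c₀ := -1) (c₁ := 1) (c₂ := 0) (fun _ => by ring)] at h
  linarith

theorem intervalMoment_half_one_eq (hg : Continuous g)
    (hself : ∀ x, 0 ≤ x → g x = ∫ t in (0:ℝ)..2 * x, g t) :
    intervalMoment g 0 (1 / 2) 1 = (intervalMoment g 0 1 0 - intervalMoment g 0 1 2) / 8 := by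
  have h := integral_half_mul_of_self_similar (ψ := fun u => u) (Ψ := fun u => (u ^ 2 - 1) / 2)
    hg hself continuous_id (fun x => by simpa using ((hasDerivAt_pow 2 x).sub_const 1).div_const 2)
    (by norm_num)
  rw [integral_quadratic_mul_eq hg (c₀ := 0) (c₁ := 2) (c₂ := 0) (fun _ => by ring),
    integral_quadratic_mul_eq hg (c₀ := -1 / 2) (c₁ := 0) (c₂ := 1 / 2) (fun _ => by ring)] at h
  linarith

theorem intervalMoment_half_zero_eq_five_div_seventy_two (hg : Continuous g)
    (hsym : ∀ x, 0 ≤ x → x ≤ 1 → g x + g (1 - x) = 1)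
    (hself : ∀ x, 0 ≤ x → g x = ∫ t in (0:ℝ)..2 * x, g t) :
    intervalMoment g 0 (1 / 2) 0 = 5 / 72 := by
  linarith [intervalMoment_zero_eq_half hg hsym, intervalMoment_two_eq hg hsym,
    intervalMoment_one_eq hg hsym, intervalMoment_half_zero_eq hg hself,
    intervalMoment_half_one_eq hg hself]

theorem fabius_stmt_14 (f : ℝ → ℝ)
    (hcont : ContinuousOn f (Set.Ici 0))
    (hsym : ∀ x : ℝ, 0 ≤ x → x ≤ 1 → f x + f (1 - x) = 1)
    (hint : ∀ x : ℝ, 0 ≤ x → f x = ∫ t in (0:ℝ)..(2 * x), f t) :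
    f (1 / 4) = 5 / 72 ∧ f (3 / 4) = 67 / 72 := by
  set g : ℝ → ℝ := fun x => f (max x 0)
  have hg : Continuous g :=
    hcont.comp_continuous (continuous_id.max continuous_const) fun x => le_max_right x 0
  have hfg : ∀ x, 0 ≤ x → g x = f x := fun x hx => by simp only [g, max_eq_left hx]
  have hgsym : ∀ x, 0 ≤ x → x ≤ 1 → g x + g (1 - x) = 1 := fun x hx hx1 => by
    rw [hfg x hx, hfg (1 - x) (by linarith), hsym x hx hx1]
  have hgself : ∀ x, 0 ≤ x → g x = ∫ t in (0:ℝ)..2 * x, g t := fun x hx => by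
    rw [hfg x hx, hint x hx]
    refine integral_congr fun t ht => (hfg t ?_).symm
    rw [uIcc_of_le (by linarith)] at ht
    exact ht.1
  have hquarter : f (1 / 4) = 5 / 72 := by
    rw [← hfg _ (by norm_num), hgself _ (by norm_num),
      ← intervalMoment_half_zero_eq_five_div_seventy_two hg hgsym hgself]
    norm_num [intervalMoment]
  refine ⟨hquarter, ?_⟩
  have := hsym (1 / 4) (by norm_num) (by norm_num)
  norm_num at this
  linarith
end

section
/- One has f(1/8) = 1/288, f(3/8) = 73/288, f(5/8) = 215/288, and f(7/8) = 287/288. -/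
open intervalIntegral Set MeasureTheory

/-!
Extend `f` by `0` to the left; the extension `g` is continuous on `ℝ` and still satisfies
`g x = ∫₀^{2x} g`, so `g' x = 2 g (2x)` and `∫₀^b g = g (b/2)`. Differentiating
`g x + g (1 - x) = 1` gives `g y = g (2 - y)` on `[0, 2]`. Integration by parts turns the moment
`∫₀^b x^(k+1) g` into `b^(k+1) g (b/2)` minus a multiple of the `k`-th moment over `[0, b/2]`, so
the first two moments over `[0, 1/2]`, `[0, 1]` and `[0, 2]` are linear in `g (1/4)` and `g (1/8)`.
The two reflections `x ↦ 1 - x` on `[0, 1]` and `x ↦ 2 - x` on `[1, 2]`, applied to the second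
moment, give two linear equations whose solution is `g (1/4) = 5/72`, `g (1/8) = 1/288`.
Then `g (3/8) = ∫₀^{1/4} g + ∫_{1/4}^{3/4} g = g (1/8) + 1/4`, and the values at `5/8` and `7/8`
follow from `f x + f (1 - x) = 1`.
-/

lemma continuous_comp_max_zero {f : ℝ → ℝ} (hf : ContinuousOn f (Ici 0)) :
    Continuous fun x => f (max x 0) :=
  hf.comp_continuous (continuous_id.max continuous_const) fun x => le_max_right x 0

lemma comp_max_zero_eq_integral {f : ℝ → ℝ}
    (hf : ∀ x : ℝ, 0 ≤ x → f x = ∫ t in (0:ℝ)..(2 * x), f t) (x : ℝ) :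
    f (max x 0) = ∫ t in (0:ℝ)..(2 * x), f (max t 0) := by
  rcases le_total 0 x with hx | hx
  · rw [max_eq_left hx, hf x hx]
    refine integral_congr fun t ht => ?_
    rw [uIcc_of_le (by linarith)] at ht
    rw [max_eq_left ht.1]
  · have hf0 : f 0 = 0 := by simpa using hf 0 le_rfl
    have hzero : EqOn (fun t => f (max t 0)) 0 (uIcc 0 (2 * x)) := fun t ht => by
      rw [uIcc_of_ge (by linarith)] at ht
      simp [max_eq_right ht.2, hf0]
    rw [max_eq_right hx, hf0, integral_congr hzero, Pi.zero_def, intervalIntegral.integral_zero]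

lemma integral_sub_sq_mul {g : ℝ → ℝ} (hg : Continuous g) (a b c : ℝ) :
    ∫ x in a..b, (c - x) ^ 2 * g x
      = c ^ 2 * (∫ x in a..b, g x) - 2 * c * (∫ x in a..b, x * g x)
        + ∫ x in a..b, x ^ 2 * g x := by
  have hexp : (fun x => (c - x) ^ 2 * g x)
      = fun x => (c ^ 2 * g x - 2 * c * (x * g x)) + x ^ 2 * g x := by
    funext x; ring
  rw [hexp, intervalIntegral.integral_add
      ((by fun_prop : Continuous fun x => c ^ 2 * g x - 2 * c * (x * g x)).intervalIntegrable _ _)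
      ((by fun_prop : Continuous fun x => x ^ 2 * g x).intervalIntegrable _ _),
    intervalIntegral.integral_sub
      ((by fun_prop : Continuous fun x => c ^ 2 * g x).intervalIntegrable _ _)
      ((by fun_prop : Continuous fun x => 2 * c * (x * g x)).intervalIntegrable _ _),
    intervalIntegral.integral_const_mul, intervalIntegral.integral_const_mul]

section SelfIntegral

variable {g : ℝ → ℝ}

lemma integral_eq_apply_half (hself : ∀ x, g x = ∫ t in (0:ℝ)..(2 * x), g t) (b : ℝ) :
    ∫ t in (0:ℝ)..b, g t = g (b / 2) := by
  rw [hself, mul_div_cancel₀ b two_ne_zero]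

lemma hasDerivAt_of_self_integral (hg : Continuous g)
    (hself : ∀ x, g x = ∫ t in (0:ℝ)..(2 * x), g t) (x : ℝ) :
    HasDerivAt g (2 * g (2 * x)) x := by
  have hG : HasDerivAt (fun y => ∫ t in (0:ℝ)..y, g t) (g (2 * x)) (2 * x) :=
    integral_hasDerivAt_right (hg.intervalIntegrable _ _)
      hg.aestronglyMeasurable.stronglyMeasurableAtFilter hg.continuousAt
  have hcomp : (fun y => ∫ t in (0:ℝ)..y, g t) ∘ (2 * ·) = g := funext fun y => (hself y).symm
  simpa [hcomp, mul_comm] using hG.comp x ((hasDerivAt_id x).const_mul 2)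

lemma integral_pow_succ_mul (hg : Continuous g)
    (hself : ∀ x, g x = ∫ t in (0:ℝ)..(2 * x), g t) (k : ℕ) (b : ℝ) :
    ∫ x in (0:ℝ)..b, x ^ (k + 1) * g x
      = b ^ (k + 1) * g (b / 2) - (k + 1) * 2 ^ (k + 1) * ∫ x in (0:ℝ)..(b / 2), x ^ k * g x := by
  have hparts := integral_mul_deriv_eq_deriv_mul (a := 0) (b := b)
    (u := fun x => x ^ (k + 1)) (u' := fun x => (k + 1 : ℝ) * x ^ k)
    (v := fun y => ∫ t in (0:ℝ)..y, g t) (v' := g)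
    (fun x _ => by simpa using hasDerivAt_pow (k + 1) x)
    (fun x _ => integral_hasDerivAt_right (hg.intervalIntegrable _ _)
      hg.aestronglyMeasurable.stronglyMeasurableAtFilter hg.continuousAt)
    ((by fun_prop : Continuous fun x : ℝ => (k + 1 : ℝ) * x ^ k).intervalIntegrable _ _)
    (hg.intervalIntegrable _ _)
  have hsubst : ∫ x in (0:ℝ)..b, (k + 1 : ℝ) * x ^ k * ∫ t in (0:ℝ)..x, g t
      = ∫ x in (0:ℝ)..b, (fun u => (k + 1) * 2 ^ k * (u ^ k * g u)) (x / 2) := by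
    refine integral_congr fun x _ => ?_
    simp only [integral_eq_apply_half hself, div_pow]
    field_simp
  rw [hparts, hsubst, integral_comp_div (fun u => (k + 1) * 2 ^ k * (u ^ k * g u)) two_ne_zero,
    intervalIntegral.integral_const_mul, integral_eq_apply_half hself]
  simp only [zero_div, smul_eq_mul, pow_succ]
  ring

lemma apply_two_sub_of_self_integral (hg : Continuous g)
    (hself : ∀ x, g x = ∫ t in (0:ℝ)..(2 * x), g t)
    (hsym : ∀ x ∈ Icc (0:ℝ) 1, g x + g (1 - x) = 1) : ∀ y ∈ Icc (0:ℝ) 2, g (2 - y) = g y := by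
  have hopen : EqOn (fun y => g (2 - y)) g (Ioo 0 2) := by
    intro y hy
    have hx : y / 2 ∈ Ioo (0:ℝ) 1 := ⟨by linarith [hy.1], by linarith [hy.2]⟩
    have hrefl : HasDerivAt (fun t => 1 - g (1 - t)) (2 * g (2 - y)) (y / 2) :=
      (((hasDerivAt_of_self_integral hg hself (1 - y / 2)).comp (y / 2)
        ((hasDerivAt_id _).const_sub 1)).const_sub 1).congr_deriv (by ring_nf)
    have heq : g =ᶠ[nhds (y / 2)] fun t => 1 - g (1 - t) := by
      filter_upwards [Ioo_mem_nhds hx.1 hx.2] with t ht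
      linarith [hsym t ⟨ht.1.le, ht.2.le⟩]
    have := (hrefl.congr_of_eventuallyEq heq).unique (hasDerivAt_of_self_integral hg hself (y / 2))
    rw [mul_div_cancel₀ y two_ne_zero] at this
    simpa using this
  have := hopen.closure (hg.comp (continuous_const.sub continuous_id)) hg
  rwa [closure_Ioo two_ne_zero.symm] at this

end SelfIntegral

section Symmetric

variable {g p : ℝ → ℝ}

lemma integral_comp_one_sub_mul (hg : Continuous g) (hp : Continuous p)
    (hsym : ∀ x ∈ Icc (0:ℝ) 1, g x + g (1 - x) = 1) {a : ℝ} (ha : a ∈ Icc (0:ℝ) 1) :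
    ∫ x in a..(1 - a), p (1 - x) * g x
      = (∫ x in a..(1 - a), p x) - ∫ x in a..(1 - a), p x * g x := by
  have hsub : uIcc a (1 - a) ⊆ Icc 0 1 :=
    uIcc_subset_Icc ha ⟨by linarith [ha.2], by linarith [ha.1]⟩
  have hrefl : ∫ x in a..(1 - a), p (1 - x) * g x = ∫ x in a..(1 - a), p x * g (1 - x) := by
    simpa using (intervalIntegral.integral_comp_sub_left (fun x => p (1 - x) * g x) 1
      (a := a) (b := 1 - a)).symm
  rw [hrefl, ← intervalIntegral.integral_sub (hp.intervalIntegrable _ _)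
    ((by fun_prop : Continuous fun x => p x * g x).intervalIntegrable _ _)]
  exact intervalIntegral.integral_congr fun x hx => by
    linear_combination p x * hsym x (hsub hx)

lemma integral_comp_two_sub_mul (hg : Continuous g) (hp : Continuous p)
    (hsym : ∀ y ∈ Icc (0:ℝ) 2, g (2 - y) = g y) :
    ∫ x in (0:ℝ)..2, p x * g x
      = (∫ x in (0:ℝ)..1, p x * g x) + ∫ x in (0:ℝ)..1, p (2 - x) * g x := by
  have hrefl : ∫ x in (1:ℝ)..2, p x * g x = ∫ x in (0:ℝ)..1, p (2 - x) * g x := by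
    have h := intervalIntegral.integral_comp_sub_left (fun x => p (2 - x) * g x) 2
      (a := (1:ℝ)) (b := 2)
    norm_num at h
    rw [← h]
    refine intervalIntegral.integral_congr fun x hx => ?_
    rw [uIcc_of_le one_le_two] at hx
    simp [hsym x ⟨by linarith [hx.1], hx.2⟩]
  have hpg : Continuous fun x => p x * g x := by fun_prop
  rw [← hrefl, intervalIntegral.integral_add_adjacent_intervals
    (hpg.intervalIntegrable _ _) (hpg.intervalIntegrable _ _)]

end Symmetric

section Values

variable {g : ℝ → ℝ}

lemma integral_mul_of_self_integral (hg : Continuous g)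
    (hself : ∀ x, g x = ∫ t in (0:ℝ)..(2 * x), g t) (b : ℝ) :
    ∫ x in (0:ℝ)..b, x * g x = b * g (b / 2) - 2 * g (b / 4) := by
  have h := integral_pow_succ_mul hg hself 0 b
  simp only [zero_add, pow_one, pow_zero, one_mul, Nat.cast_zero] at h
  rw [h, integral_eq_apply_half hself, div_div]
  norm_num

lemma integral_sq_mul_of_self_integral (hg : Continuous g)
    (hself : ∀ x, g x = ∫ t in (0:ℝ)..(2 * x), g t) (b : ℝ) :
    ∫ x in (0:ℝ)..b, x ^ 2 * g x
      = b ^ 2 * g (b / 2) - 8 * (b / 2 * g (b / 4) - 2 * g (b / 8)) := by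
  have h := integral_pow_succ_mul hg hself 1 b
  simp only [pow_one, integral_mul_of_self_integral hg hself, div_div] at h
  norm_num at h
  rw [h]

lemma apply_one_div_eight_of_self_integral (hg : Continuous g)
    (hself : ∀ x, g x = ∫ t in (0:ℝ)..(2 * x), g t)
    (hsym : ∀ x ∈ Icc (0:ℝ) 1, g x + g (1 - x) = 1) : g (1 / 8) = 1 / 288 := by
  have g1 : g 1 = 1 := by
    have h := hsym 0 (by norm_num)
    rw [hself 0] at h
    simpa using h
  have ghalf : g (1 / 2) = 1 / 2 := by
    have h := hsym (1 / 2) (by norm_num)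
    norm_num at h
    linarith
  have hM1 := integral_mul_of_self_integral hg hself 1
  have hsq : Continuous fun x : ℝ => x ^ 2 := by fun_prop
  have hM2 : ∫ x in (0:ℝ)..1, x ^ 2 * g x = 5 / 12 - 2 * g (1 / 4) := by
    have h := integral_comp_one_sub_mul hg hsq hsym (a := 0) (by norm_num)
    rw [sub_zero, integral_sub_sq_mul hg, integral_pow, integral_eq_apply_half hself, hM1] at h
    norm_num [ghalf] at h hM1 ⊢
    linarith
  have hA : g (1 / 4) = 5 / 72 := by
    have h := integral_comp_two_sub_mul hg hsq (apply_two_sub_of_self_integral hg hself hsym)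
    rw [integral_sub_sq_mul hg, integral_eq_apply_half hself, hM1, hM2,
      integral_sq_mul_of_self_integral hg hself] at h
    norm_num [g1, ghalf] at h
    linarith
  have hB := integral_sq_mul_of_self_integral hg hself 1
  norm_num [ghalf, hM2, hA] at hB
  linarith

lemma apply_three_div_eight_of_self_integral (hg : Continuous g)
    (hself : ∀ x, g x = ∫ t in (0:ℝ)..(2 * x), g t)
    (hsym : ∀ x ∈ Icc (0:ℝ) 1, g x + g (1 - x) = 1) : g (3 / 8) = 1 / 4 + g (1 / 8) := by
  have hmid := integral_comp_one_sub_mul hg continuous_const hsym (p := fun _ => 1)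
    (a := 1 / 4) (by norm_num)
  have hsplit := intervalIntegral.integral_add_adjacent_intervals (μ := volume)
    (hg.intervalIntegrable 0 (1 / 4)) (hg.intervalIntegrable (1 / 4) (3 / 4))
  norm_num at hmid
  rw [integral_eq_apply_half hself, integral_eq_apply_half hself] at hsplit
  norm_num at hsplit
  linarith

end Values

theorem fabius_stmt_15 (f : ℝ → ℝ)
    (hcont : ContinuousOn f (Set.Ici 0))
    (hsym : ∀ x : ℝ, 0 ≤ x → x ≤ 1 → f x + f (1 - x) = 1)
    (hint : ∀ x : ℝ, 0 ≤ x → f x = ∫ t in (0:ℝ)..(2 * x), f t) :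
    f (1 / 8) = 1 / 288 ∧
      f (3 / 8) = 73 / 288 ∧
      f (5 / 8) = 215 / 288 ∧
      f (7 / 8) = 287 / 288 := by
  set g : ℝ → ℝ := fun x => f (max x 0)
  have hg : Continuous g := continuous_comp_max_zero hcont
  have hself : ∀ x, g x = ∫ t in (0:ℝ)..(2 * x), g t := comp_max_zero_eq_integral hint
  have hgsym : ∀ x ∈ Icc (0:ℝ) 1, g x + g (1 - x) = 1 := fun x hx => by
    simpa [g, hx.1, hx.2] using hsym x hx.1 hx.2
  have h18 : f (1 / 8) = 1 / 288 := by
    simpa [g] using apply_one_div_eight_of_self_integral hg hself hgsym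
  have h38 : f (3 / 8) = 73 / 288 := by
    have h := apply_three_div_eight_of_self_integral hg hself hgsym
    norm_num [g, h18] at h ⊢
    linarith
  have h58 := hsym (3 / 8) (by norm_num) (by norm_num)
  have h78 := hsym (1 / 8) (by norm_num) (by norm_num)
  norm_num at h58 h78
  refine ⟨h18, h38, by linarith, by linarith⟩
end

section
/- One has f(1/32) = 19/33177600, f(3/32) = 25219/33177600, f(5/32) = 334781/33177600, f(7/32) = 1396781/33177600, f(9/32) = 3470381/33177600, f(11/32) = 6555581/33177600, f(13/32) = 10393219/33177600, f(15/32) = 14515219/33177600, f(17/32) = 18662381/33177600, f(19/32) = 22784381/33177600, f(21/32) = 26622019/33177600, f(23/32) = 29707219/33177600, f(25/32) = 31780819/33177600, f(27/32) = 32842819/33177600, f(29/32) = 33152381/33177600, and f(31/32) = 33177581/33177600. -/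
/-!
Extend `f` by `0` to the left; the extension `g` satisfies `g' x = 2 g (2x)` on all of `ℝ`,
so `x ↦ 2 ^ (k choose 2) g (x / 2 ^ k)` is a `k`-fold primitive of `g`. Since
`g t + g (1 - t) = 1` on `[0, 1]`, integrating `t ^ n (g t + g (1 - t)) = t ^ n` over `[0, a]`
by parts `n + 1` times gives a linear relation between values of `g` at dyadic points, with
right-hand side `a ^ (n + 1) / (n + 1)`. For `n ≤ 4` and `a ∈ {1/2, 3/8, 1/4, 1/8}`, together
with the case `n = 0` at the multiples of `1/16`, these relations form a triangular system
determining `g` at the odd multiples of `1/32`.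
-/

open Set

theorem integral_mul_eq_sum_of_hasDerivAt {P G : ℕ → ℝ → ℝ} {n : ℕ}
    (hP : ∀ k x, HasDerivAt (P k) (P (k + 1) x) x) (hPn : P (n + 1) = 0)
    (hG : ∀ k x, HasDerivAt (G (k + 1)) (G k x) x) (hG₀ : Continuous (G 0)) (a b : ℝ) :
    ∫ t in a..b, P 0 t * G 0 t =
      ∑ k ∈ Finset.range (n + 1), (-1) ^ k * (P k b * G (k + 1) b - P k a * G (k + 1) a) := by
  have hF : ∀ x, HasDerivAt (fun y => ∑ k ∈ Finset.range (n + 1), (-1) ^ k * (P k y * G (k + 1) y))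
      (P 0 x * G 0 x) x := by
    intro x
    refine (HasDerivAt.fun_sum fun k _ =>
      ((hP k x).mul (hG k x)).const_mul ((-1 : ℝ) ^ k)).congr_deriv ?_
    have := Finset.sum_range_sub' (fun k => (-1 : ℝ) ^ k * (P k x * G k x)) (n + 1)
    simp only [hPn, Pi.zero_apply, zero_mul, mul_zero, sub_zero, pow_zero, one_mul] at this
    rw [← this]
    refine Finset.sum_congr rfl fun k _ => ?_
    ring
  have hP₀ : Continuous (P 0) := continuous_iff_continuousAt.2 fun x => (hP 0 x).continuousAt
  rw [intervalIntegral.integral_eq_sub_of_hasDerivAt (fun x _ => hF x)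
    ((hP₀.mul hG₀).intervalIntegrable a b), ← Finset.sum_sub_distrib]
  simp only [mul_sub]

theorem hasDerivAt_neg_one_pow_mul_comp_one_sub {G : ℕ → ℝ → ℝ}
    (hG : ∀ k x, HasDerivAt (G (k + 1)) (G k x) x) (k : ℕ) (x : ℝ) :
    HasDerivAt (fun t => (-1) ^ (k + 1) * G (k + 1) (1 - t)) ((-1) ^ k * G k (1 - x)) x := by
  refine (((hG k (1 - x)).comp x ((hasDerivAt_id x).const_sub 1)).const_mul
    ((-1 : ℝ) ^ (k + 1))).congr_deriv ?_
  simp only [pow_succ]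
  ring

theorem hasDerivAt_descFactorial_mul_pow (n k : ℕ) (x : ℝ) :
    HasDerivAt (fun t : ℝ => (n.descFactorial k : ℝ) * t ^ (n - k))
      ((n.descFactorial (k + 1) : ℝ) * x ^ (n - (k + 1))) x := by
  refine ((hasDerivAt_pow (n - k) x).const_mul _).congr_deriv ?_
  rw [Nat.descFactorial_succ, Nat.sub_sub, Nat.cast_mul]
  ring

noncomputable def iterPrimitive (g : ℝ → ℝ) (k : ℕ) (x : ℝ) : ℝ :=
  2 ^ k.choose 2 * g (x / 2 ^ k)

theorem hasDerivAt_iterPrimitive {g : ℝ → ℝ} (hd : ∀ x, HasDerivAt g (2 * g (2 * x)) x)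
    (k : ℕ) (x : ℝ) : HasDerivAt (iterPrimitive g (k + 1)) (iterPrimitive g k x) x := by
  have h := ((hd (x / 2 ^ (k + 1))).comp x ((hasDerivAt_id x).div_const (2 ^ (k + 1)))).const_mul
    ((2 : ℝ) ^ (k + 1).choose 2)
  refine h.congr_deriv ?_
  have hx : 2 * (x / 2 ^ (k + 1)) = x / 2 ^ k := by field_simp; ring
  rw [hx, Nat.choose_succ_left _ _ (Nat.succ_pos 1), Nat.choose_one_right, pow_add, iterPrimitive]
  field_simp
  ring

@[simp]
theorem iterPrimitive_zero (g : ℝ → ℝ) : iterPrimitive g 0 = g := by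
  funext x; simp [iterPrimitive]

theorem hasDerivAt_of_eq_integral_two_mul_s17 {g : ℝ → ℝ} (hc : Continuous g)
    (hg : ∀ x, g x = ∫ t in (0 : ℝ)..2 * x, g t) (x : ℝ) : HasDerivAt g (2 * g (2 * x)) x := by
  have h := (hc.integral_hasStrictDerivAt 0 (2 * x)).hasDerivAt.comp x
    ((hasDerivAt_id x).const_mul 2)
  rw [mul_one, mul_comm] at h
  exact h.congr_of_eventuallyEq (Filter.Eventually.of_forall hg)

/-- The Fabius function, extended by `0` to the left so that `g' x = 2 g (2x)` on all of `ℝ`. -/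
structure IsFabius (g : ℝ → ℝ) : Prop where
  hasDerivAt : ∀ x, HasDerivAt g (2 * g (2 * x)) x
  apply_zero : g 0 = 0
  add_apply_one_sub : ∀ x ∈ Icc (0 : ℝ) 1, g x + g (1 - x) = 1

namespace IsFabius

variable {g : ℝ → ℝ}

theorem continuous (hg : IsFabius g) : Continuous g :=
  continuous_iff_continuousAt.2 fun x => (hg.hasDerivAt x).continuousAt

theorem iterPrimitive_apply_zero (hg : IsFabius g) (k : ℕ) : iterPrimitive g k 0 = 0 := by
  simp [iterPrimitive, hg.apply_zero]

theorem integral_pow_mul_add_integral_pow_mul_one_sub (hg : IsFabius g) (n : ℕ) {a : ℝ}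
    (ha : a ∈ Icc (0 : ℝ) 1) :
    (∫ t in (0 : ℝ)..a, t ^ n * g t) + ∫ t in (0 : ℝ)..a, t ^ n * g (1 - t) =
      a ^ (n + 1) / (n + 1) := by
  have hg₀ := hg.continuous
  rw [← intervalIntegral.integral_add
    ((by fun_prop : Continuous fun t : ℝ => t ^ n * g t).intervalIntegrable _ _)
    ((by fun_prop : Continuous fun t : ℝ => t ^ n * g (1 - t)).intervalIntegrable _ _),
    show a ^ (n + 1) / (n + 1) = ∫ t in (0 : ℝ)..a, t ^ n by simp [integral_pow]]
  refine intervalIntegral.integral_congr fun t ht => ?_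
  rw [uIcc_of_le ha.1] at ht
  simp [← mul_add, hg.add_apply_one_sub t ⟨ht.1, ht.2.trans ha.2⟩]

theorem moment_identity (hg : IsFabius g) (n : ℕ) {a : ℝ} (ha : a ∈ Icc (0 : ℝ) 1) :
    ∑ k ∈ Finset.range (n + 1), (n.descFactorial k : ℝ) * a ^ (n - k) *
        ((-1) ^ k * iterPrimitive g (k + 1) a - iterPrimitive g (k + 1) (1 - a)) +
      n.factorial * iterPrimitive g (n + 1) 1 = a ^ (n + 1) / (n + 1) := by
  set P : ℕ → ℝ → ℝ := fun k t => n.descFactorial k * t ^ (n - k)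
  have hP : ∀ k x, HasDerivAt (P k) (P (k + 1) x) x := hasDerivAt_descFactorial_mul_pow n
  have hPn : P (n + 1) = 0 := by funext t; simp [P]
  have hG := hasDerivAt_iterPrimitive hg.hasDerivAt
  have I := integral_mul_eq_sum_of_hasDerivAt hP hPn hG (by simpa using hg.continuous) 0 a
  have I' := integral_mul_eq_sum_of_hasDerivAt hP hPn
    (G := fun k t => (-1) ^ k * iterPrimitive g k (1 - t))
    (hasDerivAt_neg_one_pow_mul_comp_one_sub hG)
    (by have := hg.continuous; simp only [pow_zero, one_mul, iterPrimitive_zero]; fun_prop) 0 a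
  have hsign : ∀ k : ℕ, (-1 : ℝ) ^ k * (-1) ^ (k + 1) = -1 := fun k => by
    rw [pow_succ, ← mul_assoc, ← mul_pow]; norm_num
  have hend : ∑ k ∈ Finset.range (n + 1), (-1) ^ k * ((n.descFactorial k : ℝ) * 0 ^ (n - k) *
      ((-1) ^ (k + 1) * iterPrimitive g (k + 1) 1)) =
        -(n.factorial * iterPrimitive g (n + 1) 1) := by
    rw [Finset.sum_range_succ, Finset.sum_eq_zero fun k hk => by
      rw [zero_pow (by simp at hk; omega)]; ring]
    rw [Nat.descFactorial_self, Nat.sub_self, pow_zero, zero_add]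
    linear_combination (n.factorial * iterPrimitive g (n + 1) 1 : ℝ) * hsign n
  have hsum := hg.integral_pow_mul_add_integral_pow_mul_one_sub n ha
  simp only [P, iterPrimitive_zero, Nat.descFactorial_zero, Nat.sub_zero, Nat.cast_one, one_mul,
    pow_zero] at I I'
  rw [I, I'] at hsum
  simp only [hg.iterPrimitive_apply_zero, mul_zero, sub_zero, mul_sub, Finset.sum_sub_distrib,
    hend] at hsum
  rw [← hsum, sub_neg_eq_add, ← add_assoc, ← Finset.sum_add_distrib]
  congr 1
  refine Finset.sum_congr rfl fun k _ => ?_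
  linear_combination
    (-(n.descFactorial k * a ^ (n - k) * iterPrimitive g (k + 1) (1 - a)) : ℝ) * hsign k

theorem apply_one_sub (hg : IsFabius g) {x : ℝ} (hx : x ∈ Icc (0 : ℝ) 1) : g (1 - x) = 1 - g x := by
  linarith [hg.add_apply_one_sub x hx]

theorem apply_half (hg : IsFabius g) : g (1 / 2) = 1 / 2 := by
  have h := hg.apply_one_sub (x := 1 / 2) (by norm_num)
  norm_num at h
  linarith

theorem apply_sub_apply_half_sub (hg : IsFabius g) {x : ℝ} (hx : x ∈ Icc (0 : ℝ) (1 / 2)) :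
    g x - g (1 / 2 - x) = 2 * x - 1 / 2 := by
  have h := hg.moment_identity 0 (a := 2 * x) ⟨by linarith [hx.1], by linarith [hx.2]⟩
  norm_num [iterPrimitive, hg.apply_half] at h
  rw [show (1 - 2 * x) / 2 = 1 / 2 - x by ring] at h
  linarith

theorem apply_eighths (hg : IsFabius g) :
    g (1 / 8) = 1 / 288 ∧ g (1 / 4) = 5 / 72 ∧ g (3 / 8) = 73 / 288 := by
  have e2 := hg.moment_identity 2 (a := 1 / 2) (by norm_num)
  have e1 := hg.moment_identity 1 (a := 1 / 2) (by norm_num)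
  have r := hg.apply_sub_apply_half_sub (x := 1 / 8) (by norm_num)
  norm_num [Finset.sum_range_succ, iterPrimitive, Nat.descFactorial, Nat.choose] at e2 e1 r
  have h8 : g (1 / 8) = 1 / 288 := by linarith
  exact ⟨h8, by linarith, by linarith⟩

theorem apply_one_thirtysecond (hg : IsFabius g) : g (1 / 32) = 19 / 33177600 := by
  have e4 := hg.moment_identity 4 (a := 1 / 2) (by norm_num)
  norm_num [Finset.sum_range_succ, iterPrimitive, Nat.descFactorial, Nat.choose,
    hg.apply_eighths.1] at e4
  linarith

theorem apply_sixteenths (hg : IsFabius g) :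
    g (1 / 16) = 143 / 2073600 ∧ g (3 / 16) = 46657 / 2073600 ∧
      g (5 / 16) = 305857 / 2073600 ∧ g (7 / 16) = 777743 / 2073600 := by
  obtain ⟨h8, h4, h38⟩ := hg.apply_eighths
  have e3 := hg.moment_identity 3 (a := 1 / 2) (by norm_num)
  have e1 := hg.moment_identity 1 (a := 1 / 4) (by norm_num)
  have r1 := hg.apply_sub_apply_half_sub (x := 1 / 16) (by norm_num)
  have r3 := hg.apply_sub_apply_half_sub (x := 3 / 16) (by norm_num)
  norm_num [Finset.sum_range_succ, iterPrimitive, Nat.descFactorial, Nat.choose, h8, h4, h38,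
    hg.apply_one_thirtysecond] at e3 e1 r1 r3
  have h16 : g (1 / 16) = 143 / 2073600 := by linarith
  have h316 : g (3 / 16) = 46657 / 2073600 := by linarith
  exact ⟨h16, h316, by linarith, by linarith⟩

theorem apply_odd_thirtyseconds_lt_half (hg : IsFabius g) :
    g (3 / 32) = 25219 / 33177600 ∧ g (5 / 32) = 334781 / 33177600 ∧
      g (7 / 32) = 1396781 / 33177600 ∧ g (9 / 32) = 3470381 / 33177600 ∧
      g (11 / 32) = 6555581 / 33177600 ∧ g (13 / 32) = 10393219 / 33177600 ∧
      g (15 / 32) = 14515219 / 33177600 := by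
  obtain ⟨h8, h4, h38⟩ := hg.apply_eighths
  obtain ⟨h16, h316, h516, h716⟩ := hg.apply_sixteenths
  have h32 := hg.apply_one_thirtysecond
  have e3 := hg.moment_identity 2 (a := 1 / 4) (by norm_num)
  have e5 := hg.moment_identity 1 (a := 3 / 8) (by norm_num)
  have e7 := hg.moment_identity 1 (a := 1 / 8) (by norm_num)
  have r3 := hg.apply_sub_apply_half_sub (x := 3 / 32) (by norm_num)
  have r5 := hg.apply_sub_apply_half_sub (x := 5 / 32) (by norm_num)
  have r7 := hg.apply_sub_apply_half_sub (x := 7 / 32) (by norm_num)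
  have r1 := hg.apply_sub_apply_half_sub (x := 1 / 32) (by norm_num)
  norm_num [Finset.sum_range_succ, iterPrimitive, Nat.descFactorial, Nat.choose, h8, h4, h38,
    h16, h316, h516, h716, h32] at e3 e5 e7 r3 r5 r7 r1
  have h332 : g (3 / 32) = 25219 / 33177600 := by linarith
  have h532 : g (5 / 32) = 334781 / 33177600 := by linarith
  have h732 : g (7 / 32) = 1396781 / 33177600 := by linarith
  exact ⟨h332, h532, h732, by linarith, by linarith, by linarith, by linarith⟩

theorem apply_odd_thirtyseconds (hg : IsFabius g) :
    g (1 / 32) = 19 / 33177600 ∧ g (3 / 32) = 25219 / 33177600 ∧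
      g (5 / 32) = 334781 / 33177600 ∧ g (7 / 32) = 1396781 / 33177600 ∧
      g (9 / 32) = 3470381 / 33177600 ∧ g (11 / 32) = 6555581 / 33177600 ∧
      g (13 / 32) = 10393219 / 33177600 ∧ g (15 / 32) = 14515219 / 33177600 ∧
      g (17 / 32) = 18662381 / 33177600 ∧ g (19 / 32) = 22784381 / 33177600 ∧
      g (21 / 32) = 26622019 / 33177600 ∧ g (23 / 32) = 29707219 / 33177600 ∧
      g (25 / 32) = 31780819 / 33177600 ∧ g (27 / 32) = 32842819 / 33177600 ∧
      g (29 / 32) = 33152381 / 33177600 ∧ g (31 / 32) = 33177581 / 33177600 := by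
  have h1 := hg.apply_one_thirtysecond
  obtain ⟨h3, h5, h7, h9, h11, h13, h15⟩ := hg.apply_odd_thirtyseconds_lt_half
  have s1 := hg.apply_one_sub (x := 1 / 32) (by norm_num)
  have s3 := hg.apply_one_sub (x := 3 / 32) (by norm_num)
  have s5 := hg.apply_one_sub (x := 5 / 32) (by norm_num)
  have s7 := hg.apply_one_sub (x := 7 / 32) (by norm_num)
  have s9 := hg.apply_one_sub (x := 9 / 32) (by norm_num)
  have s11 := hg.apply_one_sub (x := 11 / 32) (by norm_num)
  have s13 := hg.apply_one_sub (x := 13 / 32) (by norm_num)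
  have s15 := hg.apply_one_sub (x := 15 / 32) (by norm_num)
  norm_num [h1, h3, h5, h7, h9, h11, h13, h15] at s1 s3 s5 s7 s9 s11 s13 s15
  exact ⟨h1, h3, h5, h7, h9, h11, h13, h15, s15, s13, s11, s9, s7, s5, s3, s1⟩

end IsFabius

theorem isFabius_comp_max_zero {f : ℝ → ℝ} (hcont : ContinuousOn f (Ici 0))
    (hsym : ∀ x : ℝ, 0 ≤ x → x ≤ 1 → f x + f (1 - x) = 1)
    (hint : ∀ x : ℝ, 0 ≤ x → f x = ∫ t in (0 : ℝ)..(2 * x), f t) :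
    IsFabius fun x => f (max x 0) := by
  have hf0 : f 0 = 0 := by simpa using hint 0 le_rfl
  have hc : Continuous fun x => f (max x 0) :=
    hcont.comp_continuous (by fun_prop) fun x => le_max_right x 0
  refine ⟨hasDerivAt_of_eq_integral_two_mul_s17 hc fun x => ?_, by simpa using hf0, fun x hx => ?_⟩
  · rcases le_total 0 x with hx | hx
    · rw [max_eq_left hx, hint x hx]
      refine intervalIntegral.integral_congr fun t ht => ?_
      rw [uIcc_of_le (by linarith)] at ht
      simp [max_eq_left ht.1]
    · rw [max_eq_right hx, hf0, eq_comm]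
      refine intervalIntegral.integral_zero_ae (Filter.Eventually.of_forall fun t ht => ?_)
      rw [uIoc_of_ge (by linarith)] at ht
      simp [max_eq_right ht.2, hf0]
  · simpa [max_eq_left hx.1, max_eq_left (sub_nonneg.2 hx.2)] using hsym x hx.1 hx.2

theorem fabius_stmt_17 (f : ℝ → ℝ)
    (hcont : ContinuousOn f (Set.Ici 0))
    (hsym : ∀ x : ℝ, 0 ≤ x → x ≤ 1 → f x + f (1 - x) = 1)
    (hint : ∀ x : ℝ, 0 ≤ x → f x = ∫ t in (0:ℝ)..(2 * x), f t) :
    f (1 / 32) = 19 / 33177600 ∧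
      f (3 / 32) = 25219 / 33177600 ∧
      f (5 / 32) = 334781 / 33177600 ∧
      f (7 / 32) = 1396781 / 33177600 ∧
      f (9 / 32) = 3470381 / 33177600 ∧
      f (11 / 32) = 6555581 / 33177600 ∧
      f (13 / 32) = 10393219 / 33177600 ∧
      f (15 / 32) = 14515219 / 33177600 ∧
      f (17 / 32) = 18662381 / 33177600 ∧
      f (19 / 32) = 22784381 / 33177600 ∧
      f (21 / 32) = 26622019 / 33177600 ∧
      f (23 / 32) = 29707219 / 33177600 ∧
      f (25 / 32) = 31780819 / 33177600 ∧
      f (27 / 32) = 32842819 / 33177600 ∧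
      f (29 / 32) = 33152381 / 33177600 ∧
      f (31 / 32) = 33177581 / 33177600 := by
  have h := (isFabius_comp_max_zero hcont hsym hint).apply_odd_thirtyseconds
  norm_num [max_eq_left] at h
  exact h
end
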